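/- arXiv:2508.03530 — 9 statements merged into one kernel-verified Lean document; each statement's English description precedes it below -/
import Mathlib

section
/- Let X be a fan with vertex v. If V is any open subset of X containing v, then X \ V is a fence; that is, X \ V is compact and each of its connected components is either an arc or a single point. -/
open Set Filter Topology Metric

noncomputable section

/-- An arc in a topological space: a subset homeomorphic to the closed unit
interval `[0,1]`. -/
def IsArc {X : Type*} [TopologicalSpace X] (A : Set X) : Prop :=
  Nonempty (Set.Icc (0 : ℝ) 1 ≃ₜ A)

/-- `x` is an endpoint of the arc `A`: it is the image of `0` or `1` under some
homeomorphism from `[0,1]` onto `A`. -/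
def IsArcEndpoint {X : Type*} [TopologicalSpace X] (A : Set X) (x : X) : Prop :=
  ∃ e : Set.Icc (0 : ℝ) 1 ≃ₜ A,
    (e ⟨0, by norm_num⟩ : X) = x ∨ (e ⟨1, by norm_num⟩ : X) = x

/-- A point `x` on the frontier of an open set `U` is a piercing point of `U` if
for every open `V ∋ x` and every arc `α` in the space containing `x` with `x` not
an endpoint of `α`, the set `α ∩ V` meets both `U` and the complement of the
closure of `U`. -/
def IsPiercingPoint {X : Type*} [TopologicalSpace X] (U : Set X) (x : X) : Prop :=
  x ∈ frontier U ∧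
    ∀ V : Set X, IsOpen V → x ∈ V →
      ∀ α : Set X, IsArc α → x ∈ α → ¬ IsArcEndpoint α x →
        (α ∩ V ∩ U).Nonempty ∧ (α ∩ V ∩ (closure U)ᶜ).Nonempty

/-- An open set is pierced if every point of its frontier is a piercing point. -/
def IsPierced {X : Type*} [TopologicalSpace X] (U : Set X) : Prop :=
  IsOpen U ∧ ∀ x ∈ frontier U, IsPiercingPoint U x

/-- A space has the Jure property if its topology has a basis of pierced open sets. -/
def HasJureProperty (X : Type*) [TopologicalSpace X] : Prop :=
  ∃ B : Set (Set X), TopologicalSpace.IsTopologicalBasis B ∧ ∀ U ∈ B, IsPierced U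

/-- A fence: a compact metric space each of whose connected components is an arc
or a single point. -/
def IsFenceSpace (X : Type*) [MetricSpace X] : Prop :=
  CompactSpace X ∧
    ∀ x : X, IsArc (connectedComponent x) ∨ connectedComponent x = {x}

/-- `X` is a fan with vertex `v`: a continuum which is the union of a collection
of arcs any two of which meet exactly at `v`, and in which the intersection of
any two subcontinua is connected. -/
def IsFanWithVertex (X : Type*) [MetricSpace X] (v : X) : Prop :=
  Nonempty X ∧ CompactSpace X ∧ ConnectedSpace X ∧
    (∃ 𝓛 : Set (Set X), (∀ L ∈ 𝓛, IsArc L) ∧ ⋃₀ 𝓛 = Set.univ ∧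
      ∀ L ∈ 𝓛, ∀ L' ∈ 𝓛, L ≠ L' → L ∩ L' = {v}) ∧
    ∀ H K : Set X, H.Nonempty → IsCompact H → IsPreconnected H →
      K.Nonempty → IsCompact K → IsPreconnected K → IsPreconnected (H ∩ K)

/-- The Euclidean plane. -/
abbrev Plane : Type := EuclideanSpace ℝ (Fin 2)

/-- The closed annulus `A_{rq}(p)` between the circles of radii `r` and `q`
centered at `p`. -/
def closedAnnulus (p : Plane) (r q : ℝ) : Set Plane :=
  {x | min r q ≤ dist x p ∧ dist x p ≤ max r q}

/-- A fence inside the plane: a compact set each of whose connected components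
is an arc or a single point. -/
def IsFenceSet (X : Set Plane) : Prop :=
  IsCompact X ∧ ∀ x ∈ X,
    IsArc (connectedComponentIn X x) ∨ connectedComponentIn X x = {x}

/-- `β` is a bend at `S_r(p)` terminating at `S_q(p)`: an arc `β ⊆ X` contained
in the closed annulus `A_{rq}(p)`, meeting `S_r(p)`, and meeting `S_q(p)`
exactly in its two endpoints. -/
def IsBendTerminating (X : Set Plane) (p : Plane) (r q : ℝ) (β : Set Plane) : Prop :=
  IsArc β ∧ β ⊆ X ∧ β ⊆ closedAnnulus p r q ∧
    (β ∩ Metric.sphere p r).Nonempty ∧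
    β ∩ Metric.sphere p q = {x | IsArcEndpoint β x}

/-- `β` is a bend at `S_r(p)`: a bend terminating at `S_q(p)` for some `q > 0`. -/
def IsBendAt (X : Set Plane) (p : Plane) (r : ℝ) (β : Set Plane) : Prop :=
  ∃ q > 0, IsBendTerminating X p r q β

/-- The bend `β` (terminating at `S_q(p)`) separates `ϑ` from `∞`: there is an
arc `α ⊆ D_q(p)` meeting `S_q(p)` exactly at the endpoints of `β` such that `ϑ`
lies in a bounded connected component of the complement of `α ∪ β`. -/
def SeparatesFromInfinity (p : Plane) (q : ℝ) (β : Set Plane) (ϑ : Plane) : Prop :=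
  ∃ α : Set Plane, IsArc α ∧ α ⊆ Metric.closedBall p q ∧
    α ∩ Metric.sphere p q = {x | IsArcEndpoint β x} ∧
    ϑ ∉ α ∪ β ∧ Bornology.IsBounded (connectedComponentIn ((α ∪ β)ᶜ) ϑ)

/-- `𝔅_{qrϑ}`: the set of all bends at `S_r(p)` terminating at `S_q(p)` that
separate `ϑ` from `∞`. -/
def Bends (X : Set Plane) (p : Plane) (q r : ℝ) (ϑ : Plane) : Set (Set Plane) :=
  {β | IsBendTerminating X p r q β ∧ SeparatesFromInfinity p q β ϑ}

/-- Topological limit superior of a sequence of sets: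
`⋂_N closure (⋃_{n ≥ N} A n)`. -/
def setLimsup {X : Type*} [TopologicalSpace X] (A : ℕ → Set X) : Set X :=
  ⋂ N : ℕ, closure (⋃ n, ⋃ _ : N ≤ n, A n)

/-- The point `p + q • (cos θ, sin θ)` of the circle `S_q(p)`. -/
def circlePoint (p : Plane) (q θ : ℝ) : Plane :=
  p + (q * Real.cos θ) • EuclideanSpace.single (0 : Fin 2) (1 : ℝ)
    + (q * Real.sin θ) • EuclideanSpace.single (1 : Fin 2) (1 : ℝ)

/-!
The component `C` of `x` in `X \ V` is a continuum missing the vertex. If it met two arcs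
`L ≠ L'` of the fan, then `(L ∪ C) ∩ (L' ∪ C) = C ∪ {v}` would be connected by hereditary
unicoherence, which is absurd as `C` is closed and `v ∉ C`. So `C` lies in the arc through `x`,
and a closed connected subset of an arc is an arc or a point, as in `[0, 1]`.
-/

namespace IsArc

variable {X : Type*} [TopologicalSpace X]

lemma isCompact {A : Set X} (hA : IsArc A) : IsCompact A :=
  let ⟨e⟩ := hA
  isCompact_iff_compactSpace.mpr e.compactSpace

lemma isPreconnected {A : Set X} (hA : IsArc A) : IsPreconnected A :=
  let ⟨e⟩ := hA
  isPreconnected_iff_preconnectedSpace.mpr (e.surjective.denseRange.preconnectedSpace e.continuous)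

end IsArc

lemma Topology.IsEmbedding.isArc_image_iff {X Y : Type*} [TopologicalSpace X] [TopologicalSpace Y]
    {f : X → Y} (hf : IsEmbedding f) {S : Set X} : IsArc (f '' S) ↔ IsArc S := by
  let e : S ≃ₜ f '' S := (hf.comp .subtypeVal).toHomeomorph.trans
    (Homeomorph.setCongr (Set.image_eq_range f S).symm)
  exact ⟨fun ⟨h⟩ => ⟨h.trans e.symm⟩, fun ⟨h⟩ => ⟨h.trans e⟩⟩

lemma isArc_Icc {a b : ℝ} (hab : a < b) : IsArc (Icc a b) :=
  ⟨(iccHomeoI a b hab).symm⟩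

lemma Real.isArc_or_subsingleton_of_isCompact_of_isPreconnected {S : Set ℝ} (hS : IsCompact S)
    (hSpre : IsPreconnected S) : IsArc S ∨ S.Subsingleton := by
  rcases S.eq_empty_or_nonempty with rfl | hne
  · exact .inr subsingleton_empty
  rw [eq_Icc_of_connected_compact ⟨hne, hSpre⟩ hS]
  rcases lt_or_ge (sInf S) (sSup S) with hlt | hge
  · exact .inl (isArc_Icc hlt)
  · exact .inr (subsingleton_Icc_of_ge hge)

lemma IsArc.isArc_or_subsingleton_of_subset {X : Type*} [TopologicalSpace X] {A C : Set X}
    (hA : IsArc A) (hCA : C ⊆ A) (hC : IsClosed C) (hCpre : IsPreconnected C) :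
    IsArc C ∨ C.Subsingleton := by
  obtain ⟨e⟩ := hA
  set f : Icc (0 : ℝ) 1 → X := fun t => e t
  have hf : IsEmbedding f := IsEmbedding.subtypeVal.comp e.isEmbedding
  have hfC : f '' (f ⁻¹' C) = C := by
    rw [image_preimage_eq_of_subset]
    intro y hy
    exact ⟨e.symm ⟨y, hCA hy⟩, by simp [f]⟩
  set T : Set (Icc (0 : ℝ) 1) := f ⁻¹' C
  have hT : IsCompact (Subtype.val '' T) :=
    (hC.preimage hf.continuous).isCompact.image continuous_subtype_val
  have hTpre : IsPreconnected (Subtype.val '' T) := by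
    refine IsPreconnected.image ?_ _ continuous_subtype_val.continuousOn
    rwa [← hf.isInducing.isPreconnected_image, hfC]
  rw [← hfC, hf.isArc_image_iff, ← IsEmbedding.subtypeVal.isArc_image_iff]
  rcases Real.isArc_or_subsingleton_of_isCompact_of_isPreconnected hT hTpre with h | h
  · exact .inl h
  · exact .inr ((Subtype.val_injective.subsingleton_image_iff.mp h).image f)

lemma IsClosed.isClosed_connectedComponentIn {X : Type*} [TopologicalSpace X] {F : Set X}
    (hF : IsClosed F) (x : X) : IsClosed (connectedComponentIn F x) := by
  by_cases hx : x ∈ F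
  · refine closure_subset_iff_isClosed.mp ?_
    exact isPreconnected_connectedComponentIn.closure.subset_connectedComponentIn
      (subset_closure (mem_connectedComponentIn hx))
      (closure_minimal (connectedComponentIn_subset _ _) hF)
  · rw [connectedComponentIn_eq_empty hx]
    exact isClosed_empty

def IsHereditarilyUnicoherent (X : Type*) [TopologicalSpace X] : Prop :=
  ∀ H K : Set X, H.Nonempty → IsCompact H → IsPreconnected H →
    K.Nonempty → IsCompact K → IsPreconnected K → IsPreconnected (H ∩ K)

lemma IsHereditarilyUnicoherent.disjoint_of_inter_eq_singleton {X : Type*} [TopologicalSpace X]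
    [T2Space X] (hX : IsHereditarilyUnicoherent X) {L L' C : Set X} {v : X}
    (hL : IsCompact L) (hLpre : IsPreconnected L) (hL' : IsCompact L')
    (hL'pre : IsPreconnected L') (hLL' : L ∩ L' = {v}) (hC : IsCompact C)
    (hCpre : IsPreconnected C) (hvC : v ∉ C) (hCL : (C ∩ L).Nonempty) : Disjoint C L' := by
  rw [disjoint_iff_inter_eq_empty, ← not_nonempty_iff_eq_empty]
  rintro ⟨y, hyC, hyL'⟩
  obtain ⟨x, hxC, hxL⟩ := hCL
  have hinter : (L ∪ C) ∩ (L' ∪ C) = {v} ∪ C := by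
    rw [← inter_union_distrib_right, hLL']
  have hpre : IsPreconnected ({v} ∪ C) := hinter ▸ hX _ _ ⟨x, .inl hxL⟩ (hL.union hC)
    (hLpre.union x hxL hxC hCpre) ⟨y, .inl hyL'⟩ (hL'.union hC) (hL'pre.union y hyL' hyC hCpre)
  rcases (isPreconnected_iff_subset_of_fully_disjoint_closed
      (isClosed_singleton.union hC.isClosed)).mp hpre {v} C isClosed_singleton hC.isClosed
      subset_rfl (disjoint_singleton_left.mpr hvC) with h | h
  · exact hvC (mem_singleton_iff.mp (h (.inr hxC)) ▸ hxC)
  · exact hvC (h (.inl rfl))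

lemma IsFanWithVertex.exists_isArc_superset {X : Type*} [MetricSpace X] {v : X}
    (hX : IsFanWithVertex X v) {C : Set X} (hC : IsCompact C) (hCpre : IsPreconnected C)
    (hvC : v ∉ C) {x : X} (hxC : x ∈ C) : ∃ L, IsArc L ∧ C ⊆ L := by
  obtain ⟨-, -, -, ⟨𝓛, h𝓛arc, h𝓛cover, h𝓛inter⟩, hHU⟩ := hX
  obtain ⟨L, hL𝓛, hxL⟩ : x ∈ ⋃₀ 𝓛 := h𝓛cover ▸ mem_univ x
  refine ⟨L, h𝓛arc L hL𝓛, fun y hyC => ?_⟩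
  obtain ⟨L', hL'𝓛, hyL'⟩ : y ∈ ⋃₀ 𝓛 := h𝓛cover ▸ mem_univ y
  by_contra hyL
  have hLL' : L ≠ L' := fun h => hyL (h ▸ hyL')
  exact (IsHereditarilyUnicoherent.disjoint_of_inter_eq_singleton hHU (h𝓛arc L hL𝓛).isCompact
    (h𝓛arc L hL𝓛).isPreconnected (h𝓛arc L' hL'𝓛).isCompact (h𝓛arc L' hL'𝓛).isPreconnected
    (h𝓛inter L hL𝓛 L' hL'𝓛 hLL') hC hCpre hvC ⟨x, hxC, hxL⟩).notMem_of_mem_left hyC hyL'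

/-- If `X` is a fan with vertex `v` and `V` is an open set
containing `v`, then `X \ V` is a fence: it is compact and each of its
connected components is an arc or a single point. -/
theorem fan_minus_nbhd_of_vertex_is_fence (X : Type*) [MetricSpace X]
    (v : X) (hX : IsFanWithVertex X v) (V : Set X) (hV : IsOpen V) (hvV : v ∈ V) :
    IsCompact (Vᶜ : Set X) ∧ ∀ x ∈ (Vᶜ : Set X),
      IsArc (connectedComponentIn Vᶜ x) ∨ connectedComponentIn Vᶜ x = {x} := by
  have : CompactSpace X := hX.2.1
  refine ⟨hV.isClosed_compl.isCompact, fun x hx => ?_⟩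
  have hCclosed := hV.isClosed_compl.isClosed_connectedComponentIn x
  have hxC := mem_connectedComponentIn hx
  obtain ⟨L, hL, hCL⟩ := hX.exists_isArc_superset hCclosed.isCompact
    isPreconnected_connectedComponentIn (fun hvC => connectedComponentIn_subset _ _ hvC hvV) hxC
  exact (hL.isArc_or_subsingleton_of_subset hCL hCclosed isPreconnected_connectedComponentIn).imp
    id (·.eq_singleton_of_mem hxC)
end
end

section
/- Let X ⊆ ℝ² be a compact set with empty interior (equivalently, a compact planar set of topological dimension at most 1), and let p ∈ X. Then the set Z = {r ∈ (0,∞) : S_r(p) ∩ X is totally disconnected} is a dense Gδ subset of (0,∞). -/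
open Set Filter Topology Metric

noncomputable section

/-! Identify the plane with `ℂ` and put `T_r = {θ | r e^{iθ} ∈ X}`. For `r > 0`, the set
`S_r ∩ X` is totally disconnected iff `T_r` has empty interior: an interval of angles in `T_r`
is an arc of the circle inside `X`, and conversely, once some `r e^{iθ₀}` is missing from `X`, a
branch of the argument cut at that point embeds `S_r ∩ X` into `T_r`. The radii for which `T_r`
contains a given basic open set of angles form a closed set; in log-polar coordinates
`(s, θ) ↦ e^{s + iθ}`, an open map, it has empty interior because `X` has, and Baire's theorem
applies. -/

lemma isTotallyDisconnected_of_injOn_of_mapsTo {α β : Type*} [TopologicalSpace α]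
    [TopologicalSpace β] {f : α → β} {s : Set α} {t : Set β} (hf : ContinuousOn f s)
    (hinj : InjOn f s) (hst : MapsTo f s t) (ht : IsTotallyDisconnected t) :
    IsTotallyDisconnected s :=
  fun _u hus hu _x hx _y hy => hinj (hus hx) (hus hy) <|
    ht _ ((image_mono hus).trans hst.image_subset) (hu.image f (hf.mono hus))
      (mem_image_of_mem f hx) (mem_image_of_mem f hy)

lemma isTotallyDisconnected_iff_interior_eq_empty {α : Type*}
    [ConditionallyCompleteLinearOrder α] [TopologicalSpace α] [OrderTopology α]
    [DenselyOrdered α] [NoMaxOrder α] [NoMinOrder α] {s : Set α} :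
    IsTotallyDisconnected s ↔ interior s = ∅ := by
  rw [isTotallyDisconnected_iff_lt]
  constructor
  · intro h
    by_contra hne
    obtain ⟨a, ha⟩ := nonempty_iff_ne_empty.2 hne
    obtain ⟨l, u, hlu, hsub⟩ :=
      mem_nhds_iff_exists_Ioo_subset.1 (mem_interior_iff_mem_nhds.1 ha)
    obtain ⟨b, hab, hbu⟩ := exists_between hlu.2
    obtain ⟨z, hzs, hz⟩ := h a (hsub hlu) b (hsub ⟨hlu.1.trans hab, hbu⟩) hab
    exact hzs (hsub ⟨hlu.1.trans hz.1, hz.2.trans hbu⟩)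
  · intro h x _ y _ hxy
    by_contra! hIoo
    have hsub : Ioo x y ⊆ interior s :=
      interior_maximal (fun z hz => by_contra fun hzs => hIoo z hzs hz) isOpen_Ioo
    exact (nonempty_Ioo.2 hxy).ne_empty (subset_empty_iff.1 (h ▸ hsub))

section SliceBaire

open TopologicalSpace

variable {α β : Type*} [TopologicalSpace β] {Y : Set (α × β)}

lemma setOf_interior_preimage_mk_eq_empty_eq_biInter [SecondCountableTopology β]
    (Y : Set (α × β)) :
    {a | interior (Prod.mk a ⁻¹' Y) = ∅} =
      ⋂ U ∈ countableBasis β, {a | U ⊆ Prod.mk a ⁻¹' Y}ᶜ := by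
  ext a
  simp only [mem_ofPred_eq, mem_iInter, mem_compl_iff]
  constructor
  · intro h U hU hUY
    have := interior_maximal hUY ((isBasis_countableBasis β).isOpen hU)
    exact (nonempty_of_mem_countableBasis hU).ne_empty (subset_empty_iff.1 (h ▸ this))
  · intro h
    by_contra hne
    obtain ⟨b, hb⟩ := nonempty_iff_ne_empty.2 hne
    obtain ⟨U, hU, -, hUY⟩ :=
      (isBasis_countableBasis β).exists_subset_of_mem_open hb isOpen_interior
    exact h U hU (hUY.trans interior_subset)

variable [TopologicalSpace α]

lemma isClosed_setOf_subset_preimage_mk (hY : IsClosed Y) (U : Set β) :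
    IsClosed {a | U ⊆ Prod.mk a ⁻¹' Y} := by
  simp only [subset_def, mem_preimage, ofPred_forall]
  exact isClosed_biInter fun b _ => hY.preimage (by fun_prop)

lemma interior_setOf_subset_preimage_mk_eq_empty (hY : interior Y = ∅) {U : Set β}
    (hUo : IsOpen U) (hU : U.Nonempty) : interior {a | U ⊆ Prod.mk a ⁻¹' Y} = ∅ := by
  by_contra hne
  obtain ⟨a, ha⟩ := nonempty_iff_ne_empty.2 hne
  obtain ⟨b, hb⟩ := hU
  have hbox : interior {a | U ⊆ Prod.mk a ⁻¹' Y} ×ˢ U ⊆ interior Y :=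
    interior_maximal (fun q hq => interior_subset hq.1 hq.2) (isOpen_interior.prod hUo)
  exact (hY ▸ hbox) (mk_mem_prod ha hb)

variable [SecondCountableTopology β]

lemma isGδ_setOf_interior_preimage_mk_eq_empty (hY : IsClosed Y) :
    IsGδ {a | interior (Prod.mk a ⁻¹' Y) = ∅} := by
  rw [setOf_interior_preimage_mk_eq_empty_eq_biInter]
  exact .biInter_of_isOpen (countable_countableBasis β) fun U _ =>
    (isClosed_setOf_subset_preimage_mk hY U).isOpen_compl

lemma dense_setOf_interior_preimage_mk_eq_empty [BaireSpace α] (hY : IsClosed Y)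
    (hYi : interior Y = ∅) : Dense {a | interior (Prod.mk a ⁻¹' Y) = ∅} := by
  rw [setOf_interior_preimage_mk_eq_empty_eq_biInter]
  refine dense_biInter_of_isOpen (fun U _ => (isClosed_setOf_subset_preimage_mk hY U).isOpen_compl)
    (countable_countableBasis β) fun U hU => ?_
  exact interior_eq_empty_iff_dense_compl.1 <| interior_setOf_subset_preimage_mk_eq_empty hYi
    ((isBasis_countableBasis β).isOpen hU) (nonempty_of_mem_countableBasis hU)

end SliceBaire

namespace Complex

open scoped Real ComplexOrder

variable {X : Set ℂ} {r : ℝ}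

lemma circleMap_zero_add_pi_add_arg {w : ℂ} (θ₀ : ℝ) (hw : w ∈ sphere 0 r) :
    circleMap 0 r (θ₀ + π + arg (-w / exp (θ₀ * I))) = w := by
  have hnorm : ‖-w / exp (θ₀ * I)‖ = r := by
    rw [norm_div, norm_neg, norm_exp_ofReal_mul_I, div_one, ← dist_zero_right]; exact hw
  have key := norm_mul_exp_arg_mul_I (-w / exp (θ₀ * I))
  rw [hnorm] at key
  rw [eq_div_iff (exp_ne_zero _)] at key
  rw [circleMap_zero]
  push_cast
  rw [add_mul, add_mul, exp_add, exp_add, exp_pi_mul_I]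
  linear_combination -key

lemma continuousAt_arg_neg_div_exp {w : ℂ} (θ₀ : ℝ) (hw : w ∈ sphere 0 r)
    (hw₀ : w ≠ circleMap 0 r θ₀) : ContinuousAt (fun w => arg (-w / exp (θ₀ * I))) w := by
  refine (continuousAt_arg ?_).comp (by fun_prop)
  rw [mem_slitPlane_iff_not_le_zero]
  intro hle
  apply hw₀
  have hnonneg : 0 ≤ w / exp (θ₀ * I) := by
    rw [neg_div] at hle; exact neg_nonpos.1 hle
  have hnorm : ‖w / exp (θ₀ * I)‖ = r := by
    rw [norm_div, norm_exp_ofReal_mul_I, div_one, ← dist_zero_right]; exact hw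
  have := eq_coe_norm_of_nonneg hnonneg
  rw [hnorm, div_eq_iff (exp_ne_zero _)] at this
  rw [this, circleMap_zero]

lemma interior_preimage_circleMap_eq_empty (hr : 0 < r)
    (h : IsTotallyDisconnected (sphere 0 r ∩ X)) : interior (circleMap 0 r ⁻¹' X) = ∅ := by
  by_contra hne
  obtain ⟨a, ha⟩ := nonempty_iff_ne_empty.2 hne
  obtain ⟨ε, hε, hball⟩ := Metric.isOpen_iff.1 isOpen_interior a ha
  set δ := min ε π
  have hδ : 0 < δ := lt_min hε Real.pi_pos
  have hsub : Ico a (a + δ) ⊆ circleMap 0 r ⁻¹' X := fun θ hθ =>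
    interior_subset <| hball <| by
      rw [Real.ball_eq_Ioo]
      exact ⟨by linarith [hθ.1], by linarith [hθ.2, min_le_left ε π]⟩
  have hTD : IsTotallyDisconnected (Ico a (a + δ)) :=
    isTotallyDisconnected_of_injOn_of_mapsTo (t := sphere 0 r ∩ X)
      (continuous_circleMap 0 r).continuousOn
      (injOn_circleMap_of_abs_sub_le' hr.ne' (by linarith [min_le_right ε π, Real.pi_pos]))
      (fun θ hθ => ⟨circleMap_mem_sphere 0 hr.le θ, hsub hθ⟩) h
  rw [isTotallyDisconnected_iff_interior_eq_empty, interior_Ico] at hTD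
  exact (nonempty_Ioo.2 (by linarith : a < a + δ)).ne_empty hTD

lemma isTotallyDisconnected_sphere_inter (h : interior (circleMap 0 r ⁻¹' X) = ∅) :
    IsTotallyDisconnected (sphere 0 r ∩ X) := by
  obtain ⟨θ₀, hθ₀⟩ : ∃ θ₀, circleMap 0 r θ₀ ∉ X := by
    by_contra! hall
    rw [show circleMap 0 r ⁻¹' X = univ from eq_univ_of_forall hall, interior_univ] at h
    exact univ_nonempty.ne_empty h
  have hleft : LeftInvOn (circleMap 0 r) (fun w => θ₀ + π + arg (-w / exp (θ₀ * I)))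
      (sphere 0 r ∩ X) := fun w hw => circleMap_zero_add_pi_add_arg θ₀ hw.1
  refine isTotallyDisconnected_of_injOn_of_mapsTo (t := circleMap 0 r ⁻¹' X) ?_ hleft.injOn
    (fun w hw => by rw [mem_preimage, hleft hw]; exact hw.2)
    (isTotallyDisconnected_iff_interior_eq_empty.2 h)
  intro w hw
  exact (continuousAt_const.add
    (continuousAt_arg_neg_div_exp θ₀ hw.1 (ne_of_mem_of_not_mem hw.2 hθ₀))).continuousWithinAt

lemma isTotallyDisconnected_sphere_inter_iff (hr : 0 < r) :
    IsTotallyDisconnected (sphere 0 r ∩ X) ↔ interior (circleMap 0 r ⁻¹' X) = ∅ :=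
  ⟨interior_preimage_circleMap_eq_empty hr, isTotallyDisconnected_sphere_inter⟩

lemma circleMap_zero_exp (s θ : ℝ) :
    circleMap 0 (Real.exp s) θ = exp (equivRealProdCLM.symm (s, θ)) := by
  rw [circleMap_zero, equivRealProdCLM_symm_apply, ofReal_exp, ← exp_add]

lemma interior_preimage_circleMap_exp_eq_empty (hX : interior X = ∅) :
    interior ((fun q : ℝ × ℝ => circleMap 0 (Real.exp q.1) q.2) ⁻¹' X) = ∅ := by
  have hopen : IsOpenMap (exp ∘ equivRealProdCLM.symm) :=
    isOpenMap_exp.comp equivRealProdCLM.symm.toHomeomorph.isOpenMap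
  have hcont : Continuous (exp ∘ equivRealProdCLM.symm) := by fun_prop
  have hf :
      (fun q : ℝ × ℝ => circleMap 0 (Real.exp q.1) q.2) = exp ∘ equivRealProdCLM.symm :=
    funext fun q => circleMap_zero_exp q.1 q.2
  rw [hf, ← hopen.preimage_interior_eq_interior_preimage hcont, hX, preimage_empty]

theorem isGδ_setOf_isTotallyDisconnected_sphere_inter (hX : IsClosed X) :
    IsGδ {r : ℝ | 0 < r ∧ IsTotallyDisconnected (sphere 0 r ∩ X)} := by
  have hY : IsClosed (Function.uncurry (circleMap 0) ⁻¹' X) :=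
    hX.preimage (by unfold circleMap; fun_prop)
  have hZ : {r : ℝ | 0 < r ∧ IsTotallyDisconnected (sphere 0 r ∩ X)} =
      Ioi 0 ∩ {r | interior (circleMap 0 r ⁻¹' X) = ∅} := by
    ext r
    exact and_congr_right isTotallyDisconnected_sphere_inter_iff
  rw [hZ]
  exact isOpen_Ioi.isGδ.inter (isGδ_setOf_interior_preimage_mk_eq_empty hY)

theorem Ioi_subset_closure_setOf_isTotallyDisconnected_sphere_inter (hX : IsClosed X)
    (hXi : interior X = ∅) :
    Ioi 0 ⊆ closure {r : ℝ | 0 < r ∧ IsTotallyDisconnected (sphere 0 r ∩ X)} := by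
  set G := {s : ℝ | interior (circleMap 0 (Real.exp s) ⁻¹' X) = ∅}
  have hG : Dense G := dense_setOf_interior_preimage_mk_eq_empty
    (Y := (fun q : ℝ × ℝ => circleMap 0 (Real.exp q.1) q.2) ⁻¹' X)
    (hX.preimage (by unfold circleMap; fun_prop)) (interior_preimage_circleMap_exp_eq_empty hXi)
  have hGZ : Real.exp '' G ⊆ {r : ℝ | 0 < r ∧ IsTotallyDisconnected (sphere 0 r ∩ X)} := by
    rintro _ ⟨s, hs, rfl⟩
    exact ⟨Real.exp_pos s, (isTotallyDisconnected_sphere_inter_iff (Real.exp_pos s)).2 hs⟩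
  calc Ioi 0 = Real.exp '' closure G := by rw [hG.closure_eq, image_univ, Real.range_exp]
    _ ⊆ closure (Real.exp '' G) := image_closure_subset_closure_image Real.continuous_exp
    _ ⊆ _ := closure_mono hGZ

end Complex

lemma IsometryEquiv.isTotallyDisconnected_sphere_inter_iff {α β : Type*} [PseudoMetricSpace α]
    [PseudoMetricSpace β] (ψ : α ≃ᵢ β) (a : α) (r : ℝ) (X : Set β) :
    IsTotallyDisconnected (sphere (ψ a) r ∩ X) ↔
      IsTotallyDisconnected (sphere a r ∩ ψ ⁻¹' X) := by
  rw [← ψ.toHomeomorph.isEmbedding.isTotallyDisconnected_image (s := sphere a r ∩ ψ ⁻¹' X),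
    ψ.coe_toHomeomorph, image_inter ψ.injective,
    ψ.image_sphere, ψ.surjective.image_preimage]

theorem dense_Gdelta_radii_totally_disconnected_general (X : Set Plane)
    (hXc : IsCompact X) (hXd : interior X = ∅) (p : Plane) :
    IsGδ {r : ℝ | 0 < r ∧ IsTotallyDisconnected (Metric.sphere p r ∩ X)} ∧
      Set.Ioi (0 : ℝ) ⊆
        closure {r : ℝ | 0 < r ∧ IsTotallyDisconnected (Metric.sphere p r ∩ X)} := by
  let ψ : ℂ ≃ᵢ Plane :=
    Complex.orthonormalBasisOneI.repr.toIsometryEquiv.trans (IsometryEquiv.addRight p)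
  have hψ : ψ 0 = p := by simp [ψ]
  have hZ : {r : ℝ | 0 < r ∧ IsTotallyDisconnected (sphere p r ∩ X)} =
      {r : ℝ | 0 < r ∧ IsTotallyDisconnected (sphere 0 r ∩ ψ ⁻¹' X)} := by
    ext r
    rw [← hψ]
    exact and_congr_right fun _ => ψ.isTotallyDisconnected_sphere_inter_iff 0 r X
  have hX : IsClosed (ψ ⁻¹' X) := hXc.isClosed.preimage ψ.continuous
  have hXi : interior (ψ ⁻¹' X) = ∅ := by
    rw [← ψ.coe_toHomeomorph, ← ψ.toHomeomorph.preimage_interior, hXd, preimage_empty]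
  rw [hZ]
  exact ⟨Complex.isGδ_setOf_isTotallyDisconnected_sphere_inter hX,
    Complex.Ioi_subset_closure_setOf_isTotallyDisconnected_sphere_inter hX hXi⟩

/-- For a compact planar set `X` with empty interior (i.e. of
dimension at most 1) and `p ∈ X`, the set of radii `r > 0` for which
`S_r(p) ∩ X` is totally disconnected is a dense `Gδ` subset of `(0,∞)`. -/
theorem dense_Gdelta_radii_totally_disconnected (X : Set Plane)
    (hXc : IsCompact X) (hXd : interior X = ∅) (p : Plane) (hp : p ∈ X) :
    IsGδ {r : ℝ | 0 < r ∧ IsTotallyDisconnected (Metric.sphere p r ∩ X)} ∧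
      Set.Ioi (0 : ℝ) ⊆
        closure {r : ℝ | 0 < r ∧ IsTotallyDisconnected (Metric.sphere p r ∩ X)} :=
  dense_Gdelta_radii_totally_disconnected_general X hXc hXd p
end
end

section
/- Let X ⊆ ℝ² be a compact set with empty interior, let p ∈ ℝ², and let 0 ≤ θ₁ < θ₂ ≤ 2π. Then the set F = {r ∈ (0,∞) : the circular arc {p + r·(cos t, sin t) : t ∈ [θ₁, θ₂]} is contained in X} is closed in (0,∞) and nowhere dense in (0,∞). -/
open Set Filter Topology Metric

noncomputable section

noncomputable def planeMap (p : Plane) : ℂ ≃ₜ Plane where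
  toFun z := p + z.re • EuclideanSpace.single (0 : Fin 2) (1:ℝ)
      + z.im • EuclideanSpace.single (1 : Fin 2) (1:ℝ)
  invFun y := Complex.equivRealProdCLM.symm ((y - p) 0, (y - p) 1)
  left_inv z := by
    simp [PiLp.add_apply, PiLp.sub_apply, PiLp.smul_apply, EuclideanSpace.single_apply,
      Complex.equivRealProdCLM_symm_apply, Complex.ext_iff]
  right_inv y := by
    ext i
    fin_cases i <;>
      simp [PiLp.add_apply, PiLp.sub_apply, PiLp.smul_apply, EuclideanSpace.single_apply,
        Complex.equivRealProdCLM_symm_apply, Complex.ext_iff]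
  continuous_toFun := by continuity
  continuous_invFun := by
    apply Complex.equivRealProdCLM.symm.continuous.comp
    fun_prop

lemma planeMap_exp (p : Plane) (z : ℂ) :
    planeMap p (Complex.exp z) = circlePoint p (Real.exp z.re) z.im := by
  simp [planeMap, circlePoint, Complex.exp_re, Complex.exp_im]


/-- For a compact planar set `X` with empty interior, `p ∈ ℝ²` and
angles `0 ≤ θ₁ < θ₂ ≤ 2π`, the set of radii `r > 0` for which the circular arc
`{p + r(cos t, sin t) : t ∈ [θ₁, θ₂]}` is contained in `X` is closed and
nowhere dense in the subspace `(0,∞)`. -/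
theorem radii_with_circular_arc_in_X_closed_nowhere_dense (X : Set Plane)
    (hXc : IsCompact X) (hXd : interior X = ∅) (p : Plane)
    (θ₁ θ₂ : ℝ) (h₁ : 0 ≤ θ₁) (h₁₂ : θ₁ < θ₂) (h₂ : θ₂ ≤ 2 * Real.pi) :
    IsClosed (Subtype.val ⁻¹'
        {r : ℝ | 0 < r ∧ (fun t => circlePoint p r t) '' Set.Icc θ₁ θ₂ ⊆ X} :
      Set (Set.Ioi (0 : ℝ))) ∧
    IsNowhereDense (Subtype.val ⁻¹'
        {r : ℝ | 0 < r ∧ (fun t => circlePoint p r t) '' Set.Icc θ₁ θ₂ ⊆ X} :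
      Set (Set.Ioi (0 : ℝ))) := by
  set S : Set ℝ := {r : ℝ | 0 < r ∧ (fun t => circlePoint p r t) '' Set.Icc θ₁ θ₂ ⊆ X} with hSdef
  -- Closedness
  have hclosed : IsClosed (Subtype.val ⁻¹' S : Set (Set.Ioi (0 : ℝ))) := by
    have heq : (Subtype.val ⁻¹' S : Set (Set.Ioi (0 : ℝ)))
        = Subtype.val ⁻¹' (⋂ t ∈ Set.Icc θ₁ θ₂, {r : ℝ | circlePoint p r t ∈ X}) := by
      ext ⟨r, hr⟩
      simp only [mem_preimage, hSdef, mem_setOf_eq, mem_iInter]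
      constructor
      · rintro ⟨-, h2⟩ t ht
        exact h2 ⟨t, ht, rfl⟩
      · intro h
        refine ⟨hr, ?_⟩
        rintro x ⟨t, ht, rfl⟩
        exact h t ht
    rw [heq]
    refine (isClosed_biInter fun t _ => ?_).preimage continuous_subtype_val
    exact hXc.isClosed.preimage (by unfold circlePoint; fun_prop)
  refine ⟨hclosed, hclosed.isNowhereDense_iff.mpr ?_⟩
  -- interior of S in ℝ is empty
  have hintS : interior S = ∅ := by
    by_contra h
    obtain ⟨r₀, hr₀⟩ := Set.nonempty_iff_ne_empty.mpr h
    obtain ⟨ε, hε, hball⟩ := Metric.isOpen_iff.mp isOpen_interior r₀ hr₀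
    have hr₀pos : 0 < r₀ := (interior_subset hr₀).1
    set δ : ℝ := min (ε / 2) (r₀ / 2) with hδdef
    have hδpos : 0 < δ := lt_min (by linarith) (by linarith)
    have hδr₀ : 0 < r₀ - δ := by
      have := min_le_right (ε / 2) (r₀ / 2); simp only [← hδdef] at this; linarith
    have hsub : Set.Ioo (r₀ - δ) (r₀ + δ) ⊆ S := by
      intro r hr
      refine interior_subset (hball ?_)
      have h1 : δ ≤ ε / 2 := min_le_left _ _
      rw [Metric.mem_ball, Real.dist_eq, abs_lt]
      constructor <;> [linarith [hr.1]; linarith [hr.2]]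
    set V : Set ℂ := {z : ℂ |
      z.re ∈ Set.Ioo (Real.log (r₀ - δ)) (Real.log (r₀ + δ)) ∧ z.im ∈ Set.Ioo θ₁ θ₂} with hVdef
    have hVopen : IsOpen V :=
      (isOpen_Ioo.preimage Complex.continuous_re).inter (isOpen_Ioo.preimage Complex.continuous_im)
    have hVne : V.Nonempty := by
      refine ⟨Complex.equivRealProdCLM.symm (Real.log r₀, (θ₁ + θ₂) / 2), ?_, ?_⟩ <;>
        simp only [Complex.equivRealProdCLM_symm_apply, Complex.add_re, Complex.add_im,
          Complex.ofReal_re, Complex.ofReal_im, Complex.mul_re, Complex.mul_im,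
          Complex.I_re, Complex.I_im, mul_zero, mul_one, zero_mul, sub_zero, add_zero, zero_add]
      · exact ⟨Real.log_lt_log hδr₀ (by linarith), Real.log_lt_log hr₀pos (by linarith)⟩
      · exact ⟨by linarith, by linarith⟩
    have hWopen : IsOpen ((planeMap p) '' (Complex.exp '' V)) :=
      (planeMap p).isOpenMap _ (Complex.isOpenMap_exp V hVopen)
    have hWsub : (planeMap p) '' (Complex.exp '' V) ⊆ X := by
      rintro _ ⟨_, ⟨z, hz, rfl⟩, rfl⟩
      rw [planeMap_exp]
      have hre : Real.exp z.re ∈ Set.Ioo (r₀ - δ) (r₀ + δ) := by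
        constructor
        · calc r₀ - δ = Real.exp (Real.log (r₀ - δ)) := (Real.exp_log hδr₀).symm
            _ < Real.exp z.re := Real.exp_lt_exp.mpr hz.1.1
        · calc Real.exp z.re < Real.exp (Real.log (r₀ + δ)) := Real.exp_lt_exp.mpr hz.1.2
            _ = r₀ + δ := Real.exp_log (by linarith)
      exact (hsub hre).2 ⟨z.im, ⟨le_of_lt hz.2.1, le_of_lt hz.2.2⟩, rfl⟩
    have hsub3 : (planeMap p) '' (Complex.exp '' V) ⊆ interior X :=
      interior_maximal hWsub hWopen
    rw [hXd] at hsub3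
    obtain ⟨w, hw⟩ := (hVne.image Complex.exp).image (planeMap p)
    exact hsub3 hw
  -- transfer to the subtype
  ext x
  simp only [mem_empty_iff_false, iff_false]
  intro hx
  have hopen : IsOpen (Subtype.val '' (interior (Subtype.val ⁻¹' S : Set (Set.Ioi (0:ℝ))))) :=
    (isOpen_Ioi.isOpenEmbedding_subtypeVal.isOpenMap) _ isOpen_interior
  have hsub2 : Subtype.val '' (interior (Subtype.val ⁻¹' S : Set (Set.Ioi (0:ℝ)))) ⊆ S := by
    rintro _ ⟨y, hy, rfl⟩; exact Set.mem_preimage.mp (interior_subset hy)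
  have : (x : ℝ) ∈ interior S :=
    interior_maximal hsub2 hopen ⟨x, hx, rfl⟩
  rw [hintS] at this; exact this
end
end

section
/- Let X ⊆ ℝ² be a fence, let p ∈ X, and let r > 0. If S_r(p) ∩ X is totally disconnected and no arc contained in X is a bend at S_r(p), then U_r(p) ∩ X is a pierced open subset of the space X. -/
open Set Filter Topology Metric

noncomputable section

/-!
Let `x` be a frontier point of `U_r(p) ∩ X`, so `‖x - p‖ = r`, and let `α` be an arc through `x`
with `x` not an endpoint. Parametrise `α` near `x` by `γ` on `[a, b]` with `γ t = x`. Suppose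
`‖γ(s) - p‖ ≥ r` on `[a, b]` (the case `≤` is symmetric). Since `S_r(p) ∩ X` is totally
disconnected, `γ` leaves `S_r(p)` on both sides of `t`, so `‖γ(s) - p‖` exceeds `r` somewhere on
each side. For a level `q` slightly above `r`, the last time before `t` and the first time after
`t` at which `‖γ(s) - p‖ = q` bound a sub-arc of `α` which is a bend at `S_r(p)` terminating at
`S_q(p)`, a contradiction.
-/

theorem Homeomorph.mapsTo_bot_top {α β : Type*} [ConditionallyCompleteLinearOrder α]
    [TopologicalSpace α] [OrderTopology α] [DenselyOrdered α] [BoundedOrder α] [LinearOrder β]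
    [TopologicalSpace β] [OrderClosedTopology β] [BoundedOrder β] (h : α ≃ₜ β) :
    MapsTo h {⊥, ⊤} {⊥, ⊤} := by
  have extremal : ∀ c, (∀ y, h c ≤ h y) ∨ (∀ y, h y ≤ h c) → h c = ⊥ ∨ h c = ⊤ := by
    rintro c (hc | hc)
    · obtain ⟨y, hy⟩ := h.surjective ⊥
      exact Or.inl (le_bot_iff.mp (hy ▸ hc y))
    · obtain ⟨y, hy⟩ := h.surjective ⊤
      exact Or.inr (top_le_iff.mp (hy ▸ hc y))
  rcases h.continuous.strictMono_of_inj_boundedOrder' h.injective with hmono | hanti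
  · rintro c (rfl | rfl)
    · exact extremal _ (Or.inl fun _ => hmono.monotone bot_le)
    · exact extremal _ (Or.inr fun _ => hmono.monotone le_top)
  · rintro c (rfl | rfl)
    · exact extremal _ (Or.inr fun _ => hanti.antitone bot_le)
    · exact extremal _ (Or.inl fun _ => hanti.antitone le_top)

section Arcs

variable {Y : Type*} [TopologicalSpace Y]

theorem isArcEndpoint_iff {A : Set Y} (e : Icc (0 : ℝ) 1 ≃ₜ A) {x : Y} :
    IsArcEndpoint A x ↔ x = e ⊥ ∨ x = e ⊤ := by
  constructor
  · rintro ⟨e', he'⟩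
    have hends : ∀ c : Icc (0 : ℝ) 1, c = ⊥ ∨ c = ⊤ → (e' c : Y) = e ⊥ ∨ (e' c : Y) = e ⊤ := by
      intro c hc
      have hc' := (e'.trans e.symm).mapsTo_bot_top hc
      rw [← e.apply_symm_apply (e' c)]
      rcases hc' with hc' | hc'
      · exact Or.inl (congrArg (fun u => (e u : Y)) hc')
      · exact Or.inr (congrArg (fun u => (e u : Y)) hc')
    rcases he' with rfl | rfl
    exacts [hends ⊥ (Or.inl rfl), hends ⊤ (Or.inr rfl)]
  · rintro (rfl | rfl)
    exacts [⟨e, Or.inl rfl⟩, ⟨e, Or.inr rfl⟩]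

theorem isArc_image_Icc [T2Space Y] {φ : ℝ → Y} {a b : ℝ} (hab : a < b)
    (hφ : ContinuousOn φ (Icc a b)) (hinj : InjOn φ (Icc a b)) :
    IsArc (φ '' Icc a b) ∧ {x | IsArcEndpoint (φ '' Icc a b) x} = {φ a, φ b} := by
  have hemb : IsEmbedding ((Icc a b).domRestrict φ) :=
    (hφ.domRestrict.isClosedEmbedding fun u v huv => Subtype.ext (hinj u.2 v.2 huv)).toIsEmbedding
  let e : Icc (0 : ℝ) 1 ≃ₜ φ '' Icc a b := (iccHomeoI a b hab).symm.trans
    (hemb.toHomeomorph.trans (Homeomorph.setCongr (range_domRestrict φ (Icc a b))))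
  have he0 : (e ⊥ : Y) = φ a := congrArg φ (by simp)
  have he1 : (e ⊤ : Y) = φ b := congrArg φ (by simp)
  refine ⟨⟨e⟩, Set.ext fun x => ?_⟩
  rw [mem_ofPred_eq, isArcEndpoint_iff e, he0, he1, mem_insert_iff, mem_singleton_iff]

theorem IsArc.exists_path_through {A : Set Y} (hA : IsArc A) {x : Y} (hx : x ∈ A)
    (hend : ¬ IsArcEndpoint A x) :
    ∃ γ : ℝ → Y, Continuous γ ∧ InjOn γ (Icc 0 1) ∧ (∀ s, γ s ∈ A) ∧
      ∃ t ∈ Ioo 0 1, γ t = x := by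
  obtain ⟨e⟩ := hA
  obtain ⟨t, ht⟩ := e.surjective ⟨x, hx⟩
  refine ⟨IccExtend zero_le_one fun u => (e u : Y),
    (continuous_subtype_val.comp e.continuous).Icc_extend', ?_, fun s => (e _).2, t, ?_, ?_⟩
  · intro s hs s' hs' hss'
    simp only [IccExtend_of_mem _ _ hs, IccExtend_of_mem _ _ hs'] at hss'
    exact congrArg Subtype.val (e.injective (Subtype.ext hss'))
  · have hx' : x = e t := congrArg Subtype.val ht.symm
    refine ⟨t.2.1.lt_of_ne fun h0 => hend ?_, t.2.2.lt_of_ne fun h1 => hend ?_⟩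
    · exact (isArcEndpoint_iff e).2
        (Or.inl (hx'.trans (congrArg (fun u => (e u : Y)) (Subtype.ext h0.symm))))
    · exact (isArcEndpoint_iff e).2
        (Or.inr (hx'.trans (congrArg (fun u => (e u : Y)) (Subtype.ext h1))))
  · rw [IccExtend_val, ht]

end Arcs

theorem exists_Icc_subset_of_mem_nhds {t : ℝ} {s : Set ℝ} (hs : s ∈ 𝓝 t) :
    ∃ a b, a < t ∧ t < b ∧ Icc a b ⊆ s := by
  obtain ⟨ε, hε, hball⟩ := Metric.mem_nhds_iff.mp hs
  refine ⟨t - ε / 2, t + ε / 2, by linarith, by linarith, ?_⟩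
  rw [← Real.closedBall_eq_Icc]
  exact (closedBall_subset_ball (by linarith)).trans hball

theorem IsTotallyDisconnected.exists_mem_Icc_notMem {Y : Type*} [TopologicalSpace Y] {S : Set Y}
    (hS : IsTotallyDisconnected S) {φ : ℝ → Y} {c d : ℝ} (hcd : c ≤ d)
    (hφ : ContinuousOn φ (Icc c d)) (hne : φ c ≠ φ d) : ∃ s ∈ Icc c d, φ s ∉ S := by
  by_contra! h
  exact hne (hS _ (image_subset_iff.2 h) (isPreconnected_Icc.image φ hφ)
    (mem_image_of_mem φ (left_mem_Icc.2 hcd)) (mem_image_of_mem φ (right_mem_Icc.2 hcd)))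

section Crossings

variable {α : Type*} [LinearOrder α] [TopologicalSpace α] [OrderClosedTopology α] {f : ℝ → α}
  {q : α}

theorem exists_last_eq_of_lt {a t : ℝ} (hat : a ≤ t) (hf : ContinuousOn f (Icc a t))
    (ha : q < f a) (ht : f t < q) : ∃ a' ∈ Ico a t, f a' = q ∧ ∀ s ∈ Ioc a' t, f s < q := by
  set S := Icc a t ∩ f ⁻¹' Ici q
  have hSa : a ∈ S := ⟨left_mem_Icc.2 hat, ha.le⟩
  have hS : sSup S ∈ S := (hf.preimage_isClosed_of_isClosed isClosed_Icc isClosed_Ici).csSup_mem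
    ⟨a, hSa⟩ (bddAbove_Icc.mono inter_subset_left)
  have hSt : sSup S < t := hS.1.2.lt_of_ne fun h => (h ▸ hS.2 : q ≤ f t).not_gt ht
  have hbelow : ∀ s ∈ Ioc (sSup S) t, f s < q := fun s hs => lt_of_not_ge fun hqs =>
    hs.1.not_ge (le_csSup (bddAbove_Icc.mono inter_subset_left)
      ⟨⟨(hS.1.1.trans hs.1.le), hs.2⟩, hqs⟩)
  refine ⟨sSup S, ⟨hS.1.1, hSt⟩, le_antisymm (not_lt.1 fun hlt => ?_) hS.2, hbelow⟩
  obtain ⟨s, hs, hfs⟩ := intermediate_value_Ioo' hSt.le (hf.mono (Icc_subset_Icc_left hS.1.1))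
    ⟨ht, hlt⟩
  exact (hbelow s ⟨hs.1, hs.2.le⟩).ne hfs

theorem exists_first_eq_of_lt {t b : ℝ} (htb : t ≤ b) (hf : ContinuousOn f (Icc t b))
    (ht : f t < q) (hb : q < f b) : ∃ b' ∈ Ioc t b, f b' = q ∧ ∀ s ∈ Ico t b', f s < q := by
  have hf' : ContinuousOn (fun s => f (-s)) (Icc (-b) (-t)) :=
    hf.comp continuousOn_neg fun s hs => ⟨le_neg.1 hs.2, neg_le.1 hs.1⟩
  obtain ⟨a', ha', hfa', hbelow⟩ := exists_last_eq_of_lt (neg_le_neg htb) hf'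
    (by simpa using hb) (by simpa using ht)
  refine ⟨-a', ⟨by linarith [ha'.2], by linarith [ha'.1]⟩, hfa', fun s hs => ?_⟩
  simpa using hbelow (-s) ⟨by linarith [hs.2], by linarith [hs.1]⟩

theorem exists_valley [DenselyOrdered α] {a t b : ℝ} (hf : ContinuousOn f (Icc a b))
    (hat : a ≤ t) (htb : t ≤ b) (ha : f t < f a) (hb : f t < f b) :
    ∃ q, f t < q ∧ ∃ a' ∈ Ico a t, ∃ b' ∈ Ioc t b,
      f a' = q ∧ f b' = q ∧ ∀ s ∈ Ioo a' b', f s < q := by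
  obtain ⟨q, htq, hq⟩ := exists_between (lt_min ha hb)
  obtain ⟨a', ha', hfa', hleft⟩ := exists_last_eq_of_lt hat
    (hf.mono (Icc_subset_Icc_right htb)) (hq.trans_le (min_le_left _ _)) htq
  obtain ⟨b', hb', hfb', hright⟩ := exists_first_eq_of_lt htb
    (hf.mono (Icc_subset_Icc_left hat)) htq (hq.trans_le (min_le_right _ _))
  refine ⟨q, htq, a', ha', b', hb', hfa', hfb', fun s hs => ?_⟩
  rcases le_total s t with hst | hts
  exacts [hleft s ⟨hs.1, hst⟩, hright s ⟨hts, hs.2⟩]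

end Crossings

section Bends

variable {X : Set Plane} {p : Plane} {r : ℝ} {γ : ℝ → Plane} {a t b : ℝ}

theorem isBendAt_image_Icc {q : ℝ} (hγ : ContinuousOn γ (Icc a b)) (hinj : InjOn γ (Icc a b))
    (hγX : MapsTo γ (Icc a b) X) (hat : a < t) (htb : t < b) (hr : dist (γ t) p = r)
    (ha : dist (γ a) p = q) (hb : dist (γ b) p = q)
    (hmid : ∀ s ∈ Ioo a b, dist (γ s) p ∈ uIcc r q \ {q}) :
    IsBendAt X p r (γ '' Icc a b) := by
  have hab : a < b := hat.trans htb
  obtain ⟨harc, hends⟩ := isArc_image_Icc hab hγ hinj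
  have hγab : γ a ≠ γ b := hinj.ne (left_mem_Icc.2 hab.le) (right_mem_Icc.2 hab.le) hab.ne
  -- `q = 0` would force `γ a = p = γ b`
  have hq : 0 < q := (ha ▸ dist_nonneg).lt_of_ne fun h0 =>
    hγab ((dist_eq_zero.1 (ha.trans h0.symm)).trans (dist_eq_zero.1 (hb.trans h0.symm)).symm)
  refine ⟨q, hq, harc, image_subset_iff.2 hγX, ?_,
    ⟨γ t, mem_image_of_mem γ ⟨hat.le, htb.le⟩, hr⟩, ?_⟩
  · rintro _ ⟨s, hs, rfl⟩
    rcases eq_endpoints_or_mem_Ioo_of_mem_Icc hs with rfl | rfl | hs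
    · exact ha ▸ right_mem_uIcc
    · exact hb ▸ right_mem_uIcc
    · exact (hmid s hs).1
  · rw [hends]
    ext x
    simp only [mem_inter_iff, mem_image, mem_sphere, mem_insert_iff, mem_singleton_iff]
    constructor
    · rintro ⟨⟨s, hs, rfl⟩, hsq⟩
      rcases eq_endpoints_or_mem_Ioo_of_mem_Icc hs with rfl | rfl | hs
      exacts [Or.inl rfl, Or.inr rfl, ((hmid s hs).2 hsq).elim]
    · rintro (rfl | rfl)
      exacts [⟨⟨a, left_mem_Icc.2 hab.le, rfl⟩, ha⟩, ⟨⟨b, right_mem_Icc.2 hab.le, rfl⟩, hb⟩]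

variable (htd : IsTotallyDisconnected (sphere p r ∩ X)) (hnb : ∀ β, ¬ IsBendAt X p r β)
  (hγ : ContinuousOn γ (Icc a b)) (hinj : InjOn γ (Icc a b)) (hγX : MapsTo γ (Icc a b) X)
  (hat : a < t) (htb : t < b) (hr : dist (γ t) p = r)
include htd hγ hinj hγX hat htb

theorem exists_dist_ne_on_both_sides :
    (∃ s ∈ Icc a t, dist (γ s) p ≠ r) ∧ ∃ s ∈ Icc t b, dist (γ s) p ≠ r := by
  have hmem : ∀ {c d}, a ≤ c → c < d → d ≤ b → ∃ s ∈ Icc c d, dist (γ s) p ≠ r := by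
    intro c d hac hcd hdb
    have hsub : Icc c d ⊆ Icc a b := Icc_subset_Icc hac hdb
    obtain ⟨s, hs, hS⟩ := htd.exists_mem_Icc_notMem hcd.le (hγ.mono hsub)
      (hinj.ne (hsub (left_mem_Icc.2 hcd.le)) (hsub (right_mem_Icc.2 hcd.le)) hcd.ne)
    exact ⟨s, hs, fun h => hS ⟨h, hγX (hsub hs)⟩⟩
  exact ⟨hmem le_rfl hat htb.le, hmem hat.le htb le_rfl⟩

include hnb hr

theorem exists_dist_lt_of_forall_not_isBendAt : ∃ s ∈ Icc a b, dist (γ s) p < r := by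
  by_contra! hge
  obtain ⟨⟨a₀, ha₀, hne_a⟩, b₀, hb₀, hne_b⟩ := exists_dist_ne_on_both_sides htd hγ hinj hγX hat htb
  have hdist : ContinuousOn (fun s => dist (γ s) p) (Icc a b) :=
    (continuous_id.dist continuous_const).comp_continuousOn hγ
  obtain ⟨q, -, a', ha', b', hb', ha'q, hb'q, hbelow⟩ := exists_valley
    (hdist.mono (Icc_subset_Icc ha₀.1 hb₀.2)) ha₀.2 hb₀.1
    (hr ▸ (hge a₀ ⟨ha₀.1, ha₀.2.trans htb.le⟩).lt_of_ne' hne_a)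
    (hr ▸ (hge b₀ ⟨hat.le.trans hb₀.1, hb₀.2⟩).lt_of_ne' hne_b)
  have hsub : Icc a' b' ⊆ Icc a b := Icc_subset_Icc (ha₀.1.trans ha'.1) (hb'.2.trans hb₀.2)
  refine hnb _ (isBendAt_image_Icc (hγ.mono hsub) (hinj.mono hsub) (hγX.mono_left hsub)
    ha'.2 hb'.1 hr ha'q hb'q fun s hs => ⟨Icc_subset_uIcc ⟨?_, (hbelow s hs).le⟩, (hbelow s hs).ne⟩)
  exact hge s (hsub (Ioo_subset_Icc_self hs))

theorem exists_lt_dist_of_forall_not_isBendAt : ∃ s ∈ Icc a b, r < dist (γ s) p := by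
  by_contra! hle
  obtain ⟨⟨a₀, ha₀, hne_a⟩, b₀, hb₀, hne_b⟩ := exists_dist_ne_on_both_sides htd hγ hinj hγX hat htb
  have hdist : ContinuousOn (fun s => dist (γ s) p) (Icc a b) :=
    (continuous_id.dist continuous_const).comp_continuousOn hγ
  have ha₀r : dist (γ a₀) p < dist (γ t) p :=
    hr ▸ (hle a₀ ⟨ha₀.1, ha₀.2.trans htb.le⟩).lt_of_ne hne_a
  have hb₀r : dist (γ b₀) p < dist (γ t) p :=
    hr ▸ (hle b₀ ⟨hat.le.trans hb₀.1, hb₀.2⟩).lt_of_ne hne_b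
  obtain ⟨q, -, a', ha', b', hb', ha'q, hb'q, habove⟩ :=
    exists_valley (f := fun s => OrderDual.toDual (dist (γ s) p))
      (continuous_toDual.comp_continuousOn (hdist.mono (Icc_subset_Icc ha₀.1 hb₀.2)))
      ha₀.2 hb₀.1 ha₀r hb₀r
  replace habove : ∀ s ∈ Ioo a' b', OrderDual.ofDual q < dist (γ s) p := habove
  have hsub : Icc a' b' ⊆ Icc a b := Icc_subset_Icc (ha₀.1.trans ha'.1) (hb'.2.trans hb₀.2)
  refine hnb _ (isBendAt_image_Icc (hγ.mono hsub) (hinj.mono hsub) (hγX.mono_left hsub)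
    ha'.2 hb'.1 hr ha'q hb'q fun s hs =>
      ⟨Icc_subset_uIcc' ⟨(habove s hs).le, ?_⟩, (habove s hs).ne'⟩)
  exact hle s (hsub (Ioo_subset_Icc_self hs))

end Bends

theorem no_bend_implies_pierced_general (X : Set Plane) (p : Plane) (r : ℝ)
    (htd : IsTotallyDisconnected (Metric.sphere p r ∩ X))
    (hnb : ∀ β : Set Plane, ¬ IsBendAt X p r β) :
    IsPierced (Subtype.val ⁻¹' Metric.ball p r : Set X) := by
  have hU : IsOpen (Subtype.val ⁻¹' ball p r : Set X) := isOpen_ball.preimage continuous_subtype_val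
  refine ⟨hU, fun x hx => ⟨hx, fun V hV hxV α hα hxα hend => ?_⟩⟩
  have hxr : dist (x : Plane) p = r :=
    frontier_ball_subset_sphere (continuous_subtype_val.frontier_preimage_subset _ hx)
  obtain ⟨γ, hγ, hinj, hγα, t, ht, rfl⟩ := hα.exists_path_through hxα hend
  obtain ⟨a, b, hat, htb, hab⟩ := exists_Icc_subset_of_mem_nhds
    (inter_mem (hγ.continuousAt.preimage_mem_nhds (hV.mem_nhds hxV)) (Ioo_mem_nhds ht.1 ht.2))
  have hab01 : Icc a b ⊆ Icc 0 1 := fun s hs => Ioo_subset_Icc_self (hab hs).2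
  have hΦ : ContinuousOn (fun s => (γ s : Plane)) (Icc a b) :=
    (continuous_subtype_val.comp hγ).continuousOn
  have hΦinj : InjOn (fun s => (γ s : Plane)) (Icc a b) :=
    Subtype.val_injective.comp_injOn (hinj.mono hab01)
  have hΦX : MapsTo (fun s => (γ s : Plane)) (Icc a b) X := fun s _ => (γ s).2
  obtain ⟨s, hs, hlt⟩ := exists_dist_lt_of_forall_not_isBendAt htd hnb hΦ hΦinj hΦX hat htb hxr
  obtain ⟨s', hs', hgt⟩ := exists_lt_dist_of_forall_not_isBendAt htd hnb hΦ hΦinj hΦX hat htb hxr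
  refine ⟨⟨γ s, ⟨hγα s, (hab hs).1⟩, hlt⟩, ⟨γ s', ⟨hγα s', (hab hs').1⟩, fun hcl => ?_⟩⟩
  exact hgt.not_ge (closure_ball_subset_closedBall
    (continuous_subtype_val.closure_preimage_subset _ hcl))

/-- If `X ⊆ ℝ²` is a fence, `p ∈ X`, `r > 0`, `S_r(p) ∩ X` is
totally disconnected and no arc in `X` is a bend at `S_r(p)`, then
`U_r(p) ∩ X` is a pierced open subset of the space `X`. -/
theorem no_bend_implies_pierced (X : Set Plane) (hX : IsFenceSet X)
    (p : Plane) (hp : p ∈ X) (r : ℝ) (hr : 0 < r)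
    (htd : IsTotallyDisconnected (Metric.sphere p r ∩ X))
    (hnb : ∀ β : Set Plane, ¬ IsBendAt X p r β) :
    IsPierced (Subtype.val ⁻¹' Metric.ball p r : Set X) :=
  no_bend_implies_pierced_general X p r htd hnb
end
end

section
/- Let X be a compact metric space, and for each n ∈ ℕ let A_n ⊆ X be a nonempty compact connected set and x_n ∈ A_n. If the sequence (x_n) converges in X, then limsup A_n is a nonempty compact connected subset of X (i.e., a continuum). -/
open Set Filter Topology Metric

noncomputable section

private lemma mem_setLimsup_of_tendsto' {X : Type*} [TopologicalSpace X] (A : ℕ → Set X)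
    (φ : ℕ → ℕ) (hφ : Filter.Tendsto φ Filter.atTop Filter.atTop)
    (y : ℕ → X) (hy : ∀ j, y j ∈ A (φ j)) (z : X)
    (hz : Filter.Tendsto y Filter.atTop (nhds z)) : z ∈ setLimsup A := by
  refine Set.mem_iInter.2 fun N => mem_closure_of_tendsto hz ?_
  filter_upwards [hφ.eventually_ge_atTop N] with j hj
  exact Set.mem_iUnion.2 ⟨φ j, Set.mem_iUnion.2 ⟨hj, hy j⟩⟩

private lemma limsup_core {X : Type*} [MetricSpace X] [CompactSpace X] (A : ℕ → Set X)
    (hconn : ∀ n, IsPreconnected (A n))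
    (U V : Set X) (hU : IsOpen U) (hV : IsOpen V) (hdUV : Disjoint U V)
    (hsub : setLimsup A ⊆ U ∪ V)
    (hfreqV : ∀ N, ∃ n ≥ N, (A n ∩ V).Nonempty)
    (hevU : ∀ᶠ n in Filter.atTop, (A n ∩ U).Nonempty) : False := by
  have hfreq : ∃ᶠ n in Filter.atTop, (A n ∩ V).Nonempty ∧ (A n ∩ U).Nonempty :=
    (Filter.frequently_atTop.2 hfreqV).and_eventually hevU
  have hfreq' : ∃ᶠ n in Filter.atTop, ∃ y, y ∈ A n ∧ y ∉ U ∪ V := by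
    refine hfreq.mono ?_
    rintro n ⟨hnV, hnU⟩
    by_contra h
    push_neg at h
    have hcover : A n ⊆ U ∪ V := fun a ha => by
      by_contra hc; exact hc (h a ha)
    obtain ⟨a, ha⟩ := hconn n U V hU hV hcover hnU hnV
    exact hdUV.ne_of_mem ha.2.1 ha.2.2 rfl
  obtain ⟨φ, hφmono, hφ⟩ := Filter.extraction_of_frequently_atTop hfreq'
  choose y hyA hyUV using hφ
  obtain ⟨z, -, ψ, hψmono, hz⟩ :=
    isCompact_univ.tendsto_subseq (x := y) (fun n => Set.mem_univ _)
  have hzUV : z ∉ U ∪ V := by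
    have hcl : IsClosed ((U ∪ V)ᶜ) := (hU.union hV).isClosed_compl
    exact hcl.mem_of_tendsto hz (Filter.Eventually.of_forall fun j => hyUV (ψ j))
  have hzL : z ∈ setLimsup A :=
    mem_setLimsup_of_tendsto' A (φ ∘ ψ)
      ((hφmono.comp hψmono).tendsto_atTop) (y ∘ ψ) (fun j => hyA (ψ j)) z hz
  exact hzUV (hsub hzL)

/-- In a compact metric space, if `A n` are continua and
`x n ∈ A n` with `(x n)` convergent, then `limsup A n` is a continuum. -/
theorem setLimsup_of_continua_is_continuum (X : Type*) [MetricSpace X]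
    [CompactSpace X] (A : ℕ → Set X)
    (hne : ∀ n, (A n).Nonempty) (hcpt : ∀ n, IsCompact (A n))
    (hconn : ∀ n, IsPreconnected (A n))
    (x : ℕ → X) (hx : ∀ n, x n ∈ A n)
    (hlim : ∃ l : X, Filter.Tendsto x Filter.atTop (nhds l)) :
    (setLimsup A).Nonempty ∧ IsCompact (setLimsup A) ∧
      IsPreconnected (setLimsup A) := by
  obtain ⟨l, hl⟩ := hlim
  have hlL : l ∈ setLimsup A :=
    mem_setLimsup_of_tendsto' A id Filter.tendsto_id x hx l hl
  have hclosed : IsClosed (setLimsup A) :=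
    isClosed_iInter fun N => isClosed_closure
  refine ⟨⟨l, hlL⟩, hclosed.isCompact, ?_⟩
  set s := setLimsup A with hs
  intro u v hu hv hcov hun hvn
  by_contra hempty
  push_neg at hempty
  have hemp : ∀ a, a ∈ s → a ∈ u → a ∈ v → False := fun a h1 h2 h3 => by
    have : a ∈ s ∩ (u ∩ v) := ⟨h1, h2, h3⟩
    rw [hempty] at this; exact this
  -- split s into H and K
  set H : Set X := s ∩ vᶜ with hH
  set K : Set X := s ∩ uᶜ with hK
  have hHcpt : IsCompact H := (hclosed.inter hv.isClosed_compl).isCompact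
  have hKcpt : IsCompact K := (hclosed.inter hu.isClosed_compl).isCompact
  have hHne : H.Nonempty := by
    obtain ⟨a, has, hau⟩ := hun
    refine ⟨a, has, fun hav => ?_⟩
    exact hemp a has hau hav
  have hKne : K.Nonempty := by
    obtain ⟨a, has, hav⟩ := hvn
    refine ⟨a, has, fun hau => ?_⟩
    exact hemp a has hau hav
  have hHK : s ⊆ H ∪ K := by
    intro a has
    by_cases hau : a ∈ u
    · left; exact ⟨has, fun hav => hemp a has hau hav⟩
    · right; exact ⟨has, hau⟩
  have hdisj : Disjoint H K := by
    rw [Set.disjoint_left]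
    rintro a ⟨has, hav⟩ ⟨-, hau⟩
    rcases hcov has with h | h
    · exact hau h
    · exact hav h
  obtain ⟨δ, hδ, hdUV⟩ := hdisj.exists_thickenings hHcpt hKcpt.isClosed
  set U := Metric.thickening δ H with hUdef
  set V := Metric.thickening δ K with hVdef
  have hsubUV : s ⊆ U ∪ V := fun a has =>
    (hHK has).imp (fun h => Metric.self_subset_thickening hδ H h)
      (fun h => Metric.self_subset_thickening hδ K h)
  -- from a point p in a set S, frequently A n meets thickening δ S
  have freq_of_mem : ∀ p : X, p ∈ s → ∀ S : Set X, p ∈ S →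
      ∀ N, ∃ n ≥ N, (A n ∩ Metric.thickening δ S).Nonempty := by
    intro p hps S hpS N
    have := Set.mem_iInter.1 hps N
    rw [Metric.mem_closure_iff] at this
    obtain ⟨b, hb, hdb⟩ := this δ hδ
    obtain ⟨n, hn⟩ := Set.mem_iUnion.1 hb
    obtain ⟨hnN, hbA⟩ := Set.mem_iUnion.1 hn
    exact ⟨n, hnN, b, hbA, Metric.mem_thickening_iff.2 ⟨p, hpS, by
      rw [dist_comm]; exact hdb⟩⟩
  obtain ⟨h0, hh0⟩ := hHne
  obtain ⟨k0, hk0⟩ := hKne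
  rcases hHK hlL with hlH | hlK
  · -- l ∈ H : eventually x n ∈ U
    have hevU : ∀ᶠ n in Filter.atTop, (A n ∩ U).Nonempty := by
      have hUnl : U ∈ nhds l :=
        Metric.isOpen_thickening.mem_nhds (Metric.self_subset_thickening hδ H hlH)
      exact (hl.eventually_mem hUnl).mono fun n hn => ⟨x n, hx n, hn⟩
    exact limsup_core A hconn U V Metric.isOpen_thickening Metric.isOpen_thickening
      hdUV hsubUV (freq_of_mem k0 hk0.1 K hk0) hevU
  · have hevV : ∀ᶠ n in Filter.atTop, (A n ∩ V).Nonempty := by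
      have hVnl : V ∈ nhds l :=
        Metric.isOpen_thickening.mem_nhds (Metric.self_subset_thickening hδ K hlK)
      exact (hl.eventually_mem hVnl).mono fun n hn => ⟨x n, hx n, hn⟩
    exact limsup_core A hconn V U Metric.isOpen_thickening Metric.isOpen_thickening
      hdUV.symm (by rw [Set.union_comm] at hsubUV; exact hsubUV)
      (freq_of_mem h0 hh0.1 H hh0) hevV
end
end

section
/- Let X ⊆ ℝ² be a fence, let p ∈ X, let 0 < q < r < r', and let ϑ ∈ S_q(p). If β ∈ 𝔅_{qrϑ} and β' ∈ 𝔅_{qr'ϑ}, then β ∩ β' ⊆ S_q(p); that is, the two bends are disjoint outside the circle S_q(p). -/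
open Set Filter Topology Metric

noncomputable section

/-!
Suppose `x ∈ β ∩ β'` lies off `S_q(p)`. Both bends lie in the component of `X` through `x`, which
is an arc; in a parametrisation of it by `[0,1]` they become intervals `[a,b]` and `[a',b']` whose
ends parametrise the endpoints of the bends, and `x` is interior to `[a,b]` because the endpoints
of `β` lie on `S_q(p)`. As `β'` reaches `S_{r'}(p)` and `β` does not, `[a',b']` sticks out of
`[a,b]`, so `a` or `b` is interior to `[a',b']`: an endpoint of `β`, which lies on `S_q(p)`, is a
point of `β' ∩ S_q(p)` other than an endpoint of `β'`.
-/

open unitInterval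

namespace unitInterval

theorem homeomorph_apply_eq_zero_or_one (u : I ≃ₜ I) {t : I} (ht : t = 0 ∨ t = 1) :
    u t = 0 ∨ u t = 1 := by
  obtain ⟨t₀, ht₀⟩ := u.surjective 0
  obtain ⟨t₁, ht₁⟩ := u.surjective 1
  rcases u.continuous.strictMono_of_inj u.injective with hu | hu <;> rcases ht with rfl | rfl
  · exact .inl (le_antisymm ((hu.monotone nonneg').trans_eq ht₀) nonneg')
  · exact .inr (le_antisymm le_one' (ht₁.symm.trans_le (hu.monotone le_one')))
  · exact .inr (le_antisymm le_one' (ht₁.symm.trans_le (hu.antitone nonneg')))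
  · exact .inl (le_antisymm ((hu.antitone le_one').trans_eq ht₀) nonneg')

end unitInterval

section Arcs

variable {Y Z : Type*} [TopologicalSpace Y] [TopologicalSpace Z]

theorem IsArcEndpoint.mem {A : Set Y} {x : Y} (hx : IsArcEndpoint A x) : x ∈ A := by
  obtain ⟨e, rfl | rfl⟩ := hx <;> exact Subtype.property _

theorem IsArcEndpoint.map_homeomorph {A : Set Y} {B : Set Z} (h : A ≃ₜ B) {x : A}
    (hx : IsArcEndpoint A x) : IsArcEndpoint B (h x) := by
  obtain ⟨e, he⟩ := hx
  refine ⟨e.trans h, ?_⟩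
  simp only [Homeomorph.trans_apply, ← Subtype.ext_iff] at he ⊢
  exact he.imp (congrArg h) (congrArg h)

theorem isArcEndpoint_homeomorph_apply_iff {A : Set Y} {B : Set Z} (h : A ≃ₜ B) (x : A) :
    IsArcEndpoint B (h x) ↔ IsArcEndpoint A x :=
  ⟨fun hx => by simpa using hx.map_homeomorph h.symm, (·.map_homeomorph h)⟩

theorem isArcEndpoint_iff_of_homeomorph {A : Set Y} (e : I ≃ₜ A) {x : Y} :
    IsArcEndpoint A x ↔ x = e 0 ∨ x = e 1 := by
  refine ⟨?_, fun hx => ⟨e, hx.imp Eq.symm Eq.symm⟩⟩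
  rintro ⟨f, hf⟩
  have key : ∀ t : I, t = 0 ∨ t = 1 → (f t : Y) = x → x = e 0 ∨ x = e 1 := by
    rintro t ht rfl
    have hft : f t = e ((f.trans e.symm) t) := by simp
    rcases homeomorph_apply_eq_zero_or_one (f.trans e.symm) ht with h | h <;>
      rw [hft, h] <;> simp
  exact hf.elim (key 0 (.inl rfl)) (key 1 (.inr rfl))

theorem IsArc.nontrivial {A : Set Y} (hA : IsArc A) : A.Nontrivial := by
  obtain ⟨e⟩ := hA
  exact nontrivial_coe_sort.mp e.symm.surjective.nontrivial

theorem IsArc.isPreconnected_s12 {A : Set Y} (hA : IsArc A) : IsPreconnected A := by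
  obtain ⟨e⟩ := hA
  have := e.surjective.connectedSpace e.continuous
  exact isPreconnected_iff_preconnectedSpace.mpr inferInstance

theorem IsArc.isCompact_s12 {A : Set Y} (hA : IsArc A) : IsCompact A := by
  obtain ⟨e⟩ := hA
  have := e.compactSpace
  exact isCompact_iff_compactSpace.mpr inferInstance

namespace Topology.IsEmbedding

variable {f : Y → Z} {s : Set Z}

theorem isArc_preimage_iff (hf : IsEmbedding f) (hs : s ⊆ range f) :
    IsArc (f ⁻¹' s) ↔ IsArc s :=
  ⟨fun ⟨e⟩ => ⟨e.trans (hf.homeomorphOfSubsetRange hs)⟩,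
    fun ⟨e⟩ => ⟨e.trans (hf.homeomorphOfSubsetRange hs).symm⟩⟩

theorem isArcEndpoint_preimage_iff (hf : IsEmbedding f) (hs : s ⊆ range f) (y : Y) :
    IsArcEndpoint (f ⁻¹' s) y ↔ IsArcEndpoint s (f y) := by
  by_cases hy : f y ∈ s
  · exact (isArcEndpoint_homeomorph_apply_iff (hf.homeomorphOfSubsetRange hs) ⟨y, hy⟩).symm
  · exact iff_of_false (fun h => hy h.mem) (fun h => hy h.mem)

end Topology.IsEmbedding

theorem IsArc.exists_eq_Icc {A : Set ℝ} (hA : IsArc A) :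
    ∃ a b, a < b ∧ A = Icc a b ∧ ∀ x, IsArcEndpoint A x ↔ x = a ∨ x = b := by
  obtain ⟨a, b, rfl⟩ : ∃ a b, A = Icc a b :=
    ⟨_, _, eq_Icc_of_connected_compact ⟨hA.nontrivial.nonempty, hA.isPreconnected_s12⟩ hA.isCompact_s12⟩
  have hab : a < b := by
    obtain ⟨x, hx, y, hy, hxy⟩ := hA.nontrivial
    by_contra! hba
    exact hxy (by linarith [hx.1, hx.2, hy.1, hy.2] : x = y)
  refine ⟨a, b, hab, rfl, fun x => ?_⟩
  simp [isArcEndpoint_iff_of_homeomorph (iccHomeoI a b hab).symm]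

theorem IsArc.exists_eq_Icc_unitInterval {T : Set I} (hT : IsArc T) :
    ∃ a b : I, T = Icc a b ∧ ∀ t, IsArcEndpoint T t ↔ t = a ∨ t = b := by
  have hval : IsEmbedding (Subtype.val : I → ℝ) := .subtypeVal
  have hsub : Subtype.val '' T ⊆ range (Subtype.val : I → ℝ) := image_subset_range _ _
  have hpre : Subtype.val ⁻¹' (Subtype.val '' T) = T := Subtype.val_injective.preimage_image T
  obtain ⟨a₀, b₀, hab, hTab, hend⟩ :=
    ((hval.isArc_preimage_iff hsub).mp (hpre.symm ▸ hT)).exists_eq_Icc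
  obtain ⟨a, -, rfl⟩ : a₀ ∈ Subtype.val '' T := hTab ▸ left_mem_Icc.mpr hab.le
  obtain ⟨b, -, rfl⟩ : b₀ ∈ Subtype.val '' T := hTab ▸ right_mem_Icc.mpr hab.le
  refine ⟨a, b, ?_, fun t => ?_⟩
  · ext t
    rw [← hpre, mem_preimage, hTab]
    rfl
  · rw [← hpre, hval.isArcEndpoint_preimage_iff hsub, hend, Subtype.val_inj, Subtype.val_inj]

theorem exists_Icc_of_isArc_subset {C β : Set Y} (e : I ≃ₜ C) (hβ : IsArc β) (hβC : β ⊆ C) :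
    ∃ a b : I, ∀ t, ((e t : Y) ∈ β ↔ t ∈ Icc a b) ∧
      (IsArcEndpoint β (e t) ↔ t = a ∨ t = b) := by
  have hj : IsEmbedding (Subtype.val ∘ e) := IsEmbedding.subtypeVal.comp e.isEmbedding
  have hβj : β ⊆ range (Subtype.val ∘ e) := by
    rwa [range_comp, e.range_coe, image_univ, Subtype.range_coe]
  obtain ⟨a, b, hT, hend⟩ := ((hj.isArc_preimage_iff hβj).mpr hβ).exists_eq_Icc_unitInterval
  refine ⟨a, b, fun t => ⟨Set.ext_iff.mp hT t, ?_⟩⟩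
  rw [← hend, hj.isArcEndpoint_preimage_iff hβj]
  rfl

theorem exists_end_mem_Ioo_of_mem_Ioo {α : Type*} [LinearOrder α] {a b a' b' s t : α}
    (hs : s ∈ Ioo a b) (hs' : s ∈ Icc a' b') (ht : t ∉ Icc a b) (ht' : t ∈ Icc a' b') :
    ∃ c, (c = a ∨ c = b) ∧ c ∈ Ioo a' b' := by
  simp only [mem_Ioo, mem_Icc, not_and_or, not_le] at *
  rcases ht with ht | ht
  · exact ⟨a, .inl rfl, by order, by order⟩
  · exact ⟨b, .inr rfl, by order, by order⟩

theorem IsArc.exists_endpoint_not_endpoint_of_not_subset {C β β' : Set Y} (hC : IsArc C)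
    (hβ : IsArc β) (hβ' : IsArc β') (hβC : β ⊆ C) (hβ'C : β' ⊆ C) {x : Y} (hxβ : x ∈ β)
    (hxβ' : x ∈ β') (hx : ¬ IsArcEndpoint β x) (hβ'β : ¬ β' ⊆ β) :
    ∃ y, IsArcEndpoint β y ∧ y ∈ β' ∧ ¬ IsArcEndpoint β' y := by
  obtain ⟨e⟩ := hC
  obtain ⟨a, b, hab⟩ := exists_Icc_of_isArc_subset e hβ hβC
  obtain ⟨a', b', hab'⟩ := exists_Icc_of_isArc_subset e hβ' hβ'C
  obtain ⟨s, rfl⟩ : ∃ s, (e s : Y) = x := ⟨e.symm ⟨x, hβC hxβ⟩, by simp⟩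
  obtain ⟨z, hzβ', hzβ⟩ := not_subset.mp hβ'β
  obtain ⟨t, rfl⟩ : ∃ t, (e t : Y) = z := ⟨e.symm ⟨z, hβ'C hzβ'⟩, by simp⟩
  have hs : s ∈ Ioo a b := by
    obtain ⟨hsa, hsb⟩ := not_or.mp (mt (hab s).2.mpr hx)
    rw [← Icc_sdiff_both]
    exact ⟨(hab s).1.mp hxβ, by simp [hsa, hsb]⟩
  obtain ⟨c, hc, hc'⟩ := exists_end_mem_Ioo_of_mem_Ioo hs ((hab' s).1.mp hxβ')
    (mt (hab t).1.mpr hzβ) ((hab' t).1.mp hzβ')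
  refine ⟨e c, (hab c).2.mpr hc, (hab' c).1.mpr (Ioo_subset_Icc_self hc'), fun h => ?_⟩
  rcases (hab' c).2.mp h with rfl | rfl
  exacts [hc'.1.ne rfl, hc'.2.ne rfl]

end Arcs

theorem IsFenceSet.isArc_connectedComponentIn {X : Set Plane} (hX : IsFenceSet X)
    {β : Set Plane} (hβ : IsArc β) (hβX : β ⊆ X) {x : Plane} (hx : x ∈ β) :
    IsArc (connectedComponentIn X x) := by
  refine (hX.2 x (hβX hx)).resolve_right fun hC => hβ.nontrivial.not_subset_singleton (x := x) ?_
  exact hC ▸ hβ.isPreconnected_s12.subset_connectedComponentIn hx hβX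

theorem IsBendTerminating.isArcEndpoint_iff {X : Set Plane} {p : Plane} {r q : ℝ}
    {β : Set Plane} (hβ : IsBendTerminating X p r q β) {y : Plane} :
    IsArcEndpoint β y ↔ y ∈ β ∧ y ∈ sphere p q :=
  (Set.ext_iff.mp hβ.2.2.2.2 y).symm

theorem bends_at_different_radii_disjoint_off_Sq_general (X : Set Plane)
    (hX : IsFenceSet X) (p : Plane) (q r r' : ℝ)
    (hqr : q < r) (hrr' : r < r') (ϑ : Plane)
    (β β' : Set Plane) (hβ : β ∈ Bends X p q r ϑ) (hβ' : β' ∈ Bends X p q r' ϑ) :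
    β ∩ β' ⊆ Metric.sphere p q := by
  rintro x ⟨hxβ, hxβ'⟩
  by_contra hxq
  obtain ⟨bendβ, -⟩ := hβ
  obtain ⟨bendβ', -⟩ := hβ'
  have ⟨arcβ, hβX, hβann, _⟩ := bendβ
  have ⟨arcβ', hβ'X, _, ⟨z, hzβ', hzr'⟩, _⟩ := bendβ'
  have hx : ¬ IsArcEndpoint β x := fun h => hxq (bendβ.isArcEndpoint_iff.mp h).2
  have hβ'β : ¬ β' ⊆ β := fun h => by
    have hz := (hβann (h hzβ')).2
    rw [max_eq_left hqr.le, mem_sphere.mp hzr'] at hz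
    exact hrr'.not_ge hz
  obtain ⟨y, hyβ, hyβ', hy⟩ :=
    (hX.isArc_connectedComponentIn arcβ hβX hxβ).exists_endpoint_not_endpoint_of_not_subset
      arcβ arcβ' (arcβ.isPreconnected_s12.subset_connectedComponentIn hxβ hβX)
      (arcβ'.isPreconnected_s12.subset_connectedComponentIn hxβ' hβ'X) hxβ hxβ' hx hβ'β
  exact hy (bendβ'.isArcEndpoint_iff.mpr ⟨hyβ', (bendβ.isArcEndpoint_iff.mp hyβ).2⟩)

/-- Bends at different radii are disjoint outside `S_q(p)`. -/
theorem bends_at_different_radii_disjoint_off_Sq (X : Set Plane)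
    (hX : IsFenceSet X) (p : Plane) (hp : p ∈ X) (q r r' : ℝ)
    (hq : 0 < q) (hqr : q < r) (hrr' : r < r') (ϑ : Plane) (hϑ : ϑ ∈ Metric.sphere p q)
    (β β' : Set Plane) (hβ : β ∈ Bends X p q r ϑ) (hβ' : β' ∈ Bends X p q r' ϑ) :
    β ∩ β' ⊆ Metric.sphere p q :=
  bends_at_different_radii_disjoint_off_Sq_general X hX p q r r' hqr hrr' ϑ β β' hβ hβ'
end
end

section
/- Let X ⊆ ℝ² be a fence, let p ∈ X, let q > 0, and let ϑ ∈ S_q(p). Let (r_n) be a strictly decreasing sequence in (q,∞) converging to r. If β_n ∈ 𝔅_{q r_n ϑ} for every n and β ∈ 𝔅_{q r ϑ}, then β ∩ limsup β_n ≠ ∅. -/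
open Set Filter Topology Metric

noncomputable section

/-!
If `β` meets `βₙ` there is nothing to prove. Otherwise close up both bends by their arcs in
`D_q(p)`, to `J = α ∪ β` and `Jₙ = αₙ ∪ βₙ`. Since `βₙ` reaches `S_{rₙ}(p)`, outside the disc
`D_R(p) ⊇ J`, it can be joined to infinity off `J` and so misses the bounded component of `ϑ`
in `ℝ² \ J`. The arc of `S_q(p)` from `ϑ` to the first point of `β` lies in that component,
hence misses `Jₙ`, and so `β` lies in the bounded component of `ϑ` in `ℝ² \ Jₙ`. The ray from
a point of `β ∩ S_R(p)` away from `p` must then hit `Jₙ`, necessarily in a point of `βₙ` at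
distance at most `rₙ - R`. As `rₙ - R → 0`, compactness of `β` gives a point of
`β ∩ limsup βₙ`.
-/

open AffineMap

lemma IsArc.isCompact_s14 {α : Type*} [TopologicalSpace α] {A : Set α} (h : IsArc A) :
    IsCompact A := by
  obtain ⟨e⟩ := h
  simpa using isCompact_range (continuous_subtype_val.comp e.continuous)

lemma IsArc.isPreconnected_s14 {α : Type*} [TopologicalSpace α] {A : Set α} (h : IsArc A) :
    IsPreconnected A := by
  obtain ⟨e⟩ := h
  have : PreconnectedSpace (Icc (0 : ℝ) 1) := Subtype.preconnectedSpace isPreconnected_Icc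
  simpa using isPreconnected_range (continuous_subtype_val.comp e.continuous)

lemma IsArcEndpoint.mem_s14 {α : Type*} [TopologicalSpace α] {A : Set α} {x : α}
    (h : IsArcEndpoint A x) : x ∈ A := by
  obtain ⟨e, h | h⟩ := h <;> exact h ▸ (e _).2

lemma IsArc.exists_isArcEndpoint {α : Type*} [TopologicalSpace α] {A : Set α} (h : IsArc A) :
    ∃ x, IsArcEndpoint A x :=
  let ⟨e⟩ := h
  ⟨_, e, Or.inl rfl⟩

section Circle

lemma circlePoint_eq (p : Plane) (q θ : ℝ) :
    circlePoint p q θ =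
      p + Complex.orthonormalBasisOneI.repr (q * Complex.exp (θ * Complex.I)) := by
  ext i
  fin_cases i <;> simp [circlePoint, Complex.orthonormalBasisOneI_repr_apply, Complex.exp_mul_I,
    ← Complex.ofReal_cos, ← Complex.ofReal_sin]

lemma circlePoint_mem_sphere (p : Plane) {q : ℝ} (hq : 0 ≤ q) (θ : ℝ) :
    circlePoint p q θ ∈ sphere p q := by
  simp [circlePoint_eq, abs_of_nonneg hq]

lemma exists_circlePoint_eq (p : Plane) {q : ℝ} {x : Plane} (hx : x ∈ sphere p q) :
    ∃ θ, circlePoint p q θ = x := by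
  set w := Complex.orthonormalBasisOneI.repr.symm (x - p)
  have hw : ‖w‖ = q := by
    rw [LinearIsometryEquiv.norm_map, ← dist_eq_norm, mem_sphere.mp hx]
  refine ⟨w.arg, ?_⟩
  rw [circlePoint_eq, ← hw, Complex.norm_mul_exp_arg_mul_I, LinearIsometryEquiv.apply_symm_apply,
    add_sub_cancel]

lemma circlePoint_periodic (p : Plane) (q : ℝ) :
    Function.Periodic (circlePoint p q) (2 * Real.pi) := by
  intro θ
  simp only [circlePoint, Real.cos_add_two_pi, Real.sin_add_two_pi]

lemma continuous_circlePoint (p : Plane) (q : ℝ) : Continuous (circlePoint p q) := by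
  unfold circlePoint
  fun_prop

/-- Walking along `S_q(p)` from `ϑ` until the first hit of the closed set `E`. -/
lemma exists_isPreconnected_sphere_arc {p : Plane} {q : ℝ} (hq : 0 ≤ q) {E : Set Plane}
    (hE : IsClosed E) (hEq : (E ∩ sphere p q).Nonempty) {ϑ : Plane} (hϑ : ϑ ∈ sphere p q)
    (hϑE : ϑ ∉ E) :
    ∃ e ∈ E, ∃ Γ : Set Plane, IsPreconnected Γ ∧ ϑ ∈ Γ ∧ Γ ⊆ sphere p q \ E ∧ e ∈ closure Γ := by
  obtain ⟨θ₀, rfl⟩ := exists_circlePoint_eq p hϑ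
  obtain ⟨e₀, he₀E, he₀⟩ := hEq
  obtain ⟨θe, rfl⟩ := exists_circlePoint_eq p he₀
  have hf := continuous_circlePoint p q
  set A := Icc θ₀ (θ₀ + 2 * Real.pi) ∩ circlePoint p q ⁻¹' E
  have hA : IsCompact A := isCompact_Icc.inter_right (hE.preimage hf)
  have hAne : A.Nonempty := by
    refine ⟨toIcoMod Real.two_pi_pos θ₀ θe,
      Ico_subset_Icc_self (toIcoMod_mem_Ico Real.two_pi_pos θ₀ θe), ?_⟩
    rw [mem_preimage, toIcoMod, (circlePoint_periodic p q).sub_zsmul_eq]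
    exact he₀E
  have hb : sInf A ∈ A := hA.sInf_mem hAne
  have hθb : θ₀ < sInf A := hb.1.1.lt_of_ne fun h => hϑE (h ▸ hb.2)
  refine ⟨_, hb.2, circlePoint p q '' Ico θ₀ (sInf A), isPreconnected_Ico.image _ hf.continuousOn,
    mem_image_of_mem _ (left_mem_Ico.2 hθb), ?_, ?_⟩
  · rintro _ ⟨t, ht, rfl⟩
    refine ⟨circlePoint_mem_sphere p hq t, fun htE => ht.2.not_ge ?_⟩
    exact csInf_le hA.bddBelow ⟨⟨ht.1, by linarith [hb.1.2, ht.2]⟩, htE⟩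
  · refine image_closure_subset_closure_image hf ⟨sInf A, ?_, rfl⟩
    rw [closure_Ico hθb.ne]
    exact right_mem_Icc.2 hθb.le

end Circle

section Ray

variable {E : Type*} [NormedAddCommGroup E] [NormedSpace ℝ E]

def outwardRay (p y : E) : Set E := lineMap p y '' Ici (1 : ℝ)

lemma self_mem_outwardRay (p y : E) : y ∈ outwardRay p y :=
  ⟨1, mem_Ici.2 le_rfl, lineMap_apply_one p y⟩

lemma isPreconnected_outwardRay (p y : E) : IsPreconnected (outwardRay p y) :=
  isPreconnected_Ici.image _ lineMap_continuous.continuousOn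

lemma dist_of_mem_outwardRay {p y z : E} (hz : z ∈ outwardRay p y) :
    dist y p ≤ dist z p ∧ dist z y = dist z p - dist y p := by
  obtain ⟨t, ht, rfl⟩ := hz
  have ht : (1 : ℝ) ≤ t := ht
  rw [dist_lineMap_left, dist_lineMap_right, Real.norm_eq_abs, Real.norm_eq_abs,
    abs_of_nonneg (by linarith), abs_of_nonpos (by linarith), dist_comm y p]
  constructor <;> nlinarith [dist_nonneg (x := p) (y := y)]

lemma not_isBounded_outwardRay {p y : E} (h : y ≠ p) : ¬ Bornology.IsBounded (outwardRay p y) := by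
  intro hb
  obtain ⟨K, hK⟩ := (isBounded_iff_subset_closedBall p).1 hb
  have hd : 0 < dist p y := dist_pos.2 h.symm
  set t := max 1 ((K + 1) / dist p y)
  have hKt : K < t * dist p y :=
    calc K < (K + 1) / dist p y * dist p y := by rw [div_mul_cancel₀ _ hd.ne']; linarith
      _ ≤ t * dist p y := by gcongr; exact le_max_right _ _
  have hmem := mem_closedBall.1 (hK ⟨t, (le_max_left _ _ : 1 ≤ t), rfl⟩)
  rw [dist_lineMap_left, Real.norm_eq_abs, abs_of_nonneg (by positivity)] at hmem
  linarith

end Ray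

lemma inter_nonempty_of_isBounded_connectedComponentIn {α : Type*} [TopologicalSpace α]
    [Bornology α] {F S : Set α} {x y : α} (hS : IsPreconnected S) (hSb : ¬ Bornology.IsBounded S)
    (hyS : y ∈ S) (hy : y ∈ connectedComponentIn Fᶜ x)
    (hC : Bornology.IsBounded (connectedComponentIn Fᶜ x)) : (S ∩ F).Nonempty := by
  by_contra hSF
  refine hSb (hC.subset ?_)
  rw [connectedComponentIn_eq hy]
  exact hS.subset_connectedComponentIn hyS fun z hzS hzF => hSF ⟨z, hzS, hzF⟩

/-- A preconnected set that avoids `J` and leaves a closed ball containing `J` can be continued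
to infinity along a ray outside that ball, so it misses every bounded component of `Jᶜ`. -/
lemma disjoint_connectedComponentIn_of_lt_dist {E : Type*} [NormedAddCommGroup E]
    [NormedSpace ℝ E] {J B : Set E} {p x₀ ϑ : E} {R : ℝ} (hR : 0 ≤ R) (hJ : J ⊆ closedBall p R)
    (hC : Bornology.IsBounded (connectedComponentIn Jᶜ ϑ)) (hB : IsPreconnected B)
    (hBJ : Disjoint B J) (hx₀ : x₀ ∈ B) (hx₀R : R < dist x₀ p) :
    Disjoint B (connectedComponentIn Jᶜ ϑ) := by
  rw [disjoint_left]
  intro x hxB hxC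
  have hS : IsPreconnected (B ∪ outwardRay p x₀) :=
    hB.union x₀ hx₀ (self_mem_outwardRay p x₀) (isPreconnected_outwardRay p x₀)
  have hSb : ¬ Bornology.IsBounded (B ∪ outwardRay p x₀) := fun h =>
    not_isBounded_outwardRay (dist_pos.1 (hR.trans_lt hx₀R)) (h.subset subset_union_right)
  obtain ⟨z, hzB | hzray, hzJ⟩ :=
    inter_nonempty_of_isBounded_connectedComponentIn hS hSb (Or.inl hxB) hxC hC
  · exact disjoint_left.1 hBJ hzB hzJ
  · linarith [(dist_of_mem_outwardRay hzray).1, mem_closedBall.1 (hJ hzJ)]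

section Bends

variable {X : Set Plane} {p ϑ : Plane} {q r r' : ℝ} {β β' J J' : Set Plane}

lemma IsBendTerminating.dist_mem_Icc (hβ : IsBendTerminating X p r q β) (hqr : q ≤ r)
    {x : Plane} (hx : x ∈ β) : dist x p ∈ Icc q r := by
  simpa [closedAnnulus, min_eq_right hqr, max_eq_left hqr] using hβ.2.2.1 hx

/-- `J` stands for `α ∪ β`, where `α ⊆ D_q(p)` is the arc closing up the bend `β ∈ 𝔅_{qrϑ}`. -/
structure IsBendClosure (p : Plane) (q r : ℝ) (ϑ : Plane) (β J : Set Plane) : Prop where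
  bend_subset : β ⊆ J
  subset_closedBall : J ⊆ closedBall p r
  mem_bend_of_le_dist : ∀ x ∈ J, q ≤ dist x p → x ∈ β
  notMem : ϑ ∉ J
  isBounded : Bornology.IsBounded (connectedComponentIn Jᶜ ϑ)

lemma exists_isBendClosure (hqr : q ≤ r) (hβ : β ∈ Bends X p q r ϑ) :
    ∃ J, IsBendClosure p q r ϑ β J := by
  obtain ⟨hbend, α, -, hα, hαq, hϑ, hC⟩ := hβ
  refine ⟨α ∪ β, ⟨subset_union_right, union_subset (hα.trans (closedBall_subset_closedBall hqr))
    fun x hx => mem_closedBall.2 (hbend.dist_mem_Icc hqr hx).2, ?_, hϑ, hC⟩⟩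
  rintro x (hxα | hxβ) hxq
  · have hxE : x ∈ α ∩ sphere p q := ⟨hxα, le_antisymm (mem_closedBall.1 (hα hxα)) hxq⟩
    rw [hαq] at hxE
    exact hxE.mem_s14
  · exact hxβ

namespace IsBendClosure

lemma disjoint_of_disjoint_bend (hJ : IsBendClosure p q r ϑ β J)
    (hβ' : IsBendTerminating X p r' q β') (hqr' : q ≤ r') (hββ' : Disjoint β β') :
    Disjoint β' J :=
  disjoint_left.2 fun x hx' hxJ =>
    disjoint_left.1 hββ' (hJ.mem_bend_of_le_dist x hxJ (hβ'.dist_mem_Icc hqr' hx').1) hx'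

lemma disjoint_connectedComponentIn (hJ : IsBendClosure p q r ϑ β J) (hr : 0 ≤ r)
    (hrr' : r < r') (hβ' : IsBendTerminating X p r' q β') (hqr' : q ≤ r')
    (hββ' : Disjoint β β') : Disjoint β' (connectedComponentIn Jᶜ ϑ) := by
  obtain ⟨x₀, hx₀, hx₀r'⟩ := hβ'.2.2.2.1
  exact disjoint_connectedComponentIn_of_lt_dist hr hJ.subset_closedBall hJ.isBounded
    hβ'.1.isPreconnected_s14 (hJ.disjoint_of_disjoint_bend hβ' hqr' hββ') hx₀
    (by rw [mem_sphere.1 hx₀r']; exact hrr')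

lemma subset_connectedComponentIn (hJ : IsBendClosure p q r ϑ β J)
    (hJ' : IsBendClosure p q r' ϑ β' J') (hq : 0 ≤ q) (hϑ : ϑ ∈ sphere p q)
    (hβ : IsBendTerminating X p r q β) (hβ'C : Disjoint β' (connectedComponentIn Jᶜ ϑ))
    (hβJ' : Disjoint β J') : β ⊆ connectedComponentIn J'ᶜ ϑ := by
  obtain ⟨e₀, he₀⟩ := hβ.1.exists_isArcEndpoint
  have he₀q : e₀ ∈ β ∩ sphere p q := by rw [hβ.2.2.2.2]; exact he₀
  obtain ⟨e, he, Γ, hΓ, hϑΓ, hΓq, heΓ⟩ := exists_isPreconnected_sphere_arc hq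
    hβ.1.isCompact_s14.isClosed ⟨e₀, he₀q⟩ hϑ fun h => hJ.notMem (hJ.bend_subset h)
  have hΓC : Γ ⊆ connectedComponentIn Jᶜ ϑ := hΓ.subset_connectedComponentIn hϑΓ
    fun x hx hxJ => (hΓq hx).2 (hJ.mem_bend_of_le_dist x hxJ (mem_sphere.1 (hΓq hx).1).ge)
  have hS : IsPreconnected (insert e Γ ∪ β) :=
    (hΓ.subset_closure (subset_insert e Γ) (insert_subset heΓ subset_closure)).union e
      (mem_insert e Γ) he hβ.1.isPreconnected_s14
  have hSJ' : insert e Γ ∪ β ⊆ J'ᶜ := by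
    rintro x ((rfl | hxΓ) | hxβ) hxJ'
    · exact disjoint_left.1 hβJ' he hxJ'
    · exact disjoint_left.1 hβ'C
        (hJ'.mem_bend_of_le_dist x hxJ' (mem_sphere.1 (hΓq hxΓ).1).ge) (hΓC hxΓ)
    · exact disjoint_left.1 hβJ' hxβ hxJ'
  exact subset_union_right.trans
    (hS.subset_connectedComponentIn (Or.inl (mem_insert_of_mem e hϑΓ)) hSJ')

end IsBendClosure

lemma exists_dist_le_of_mem_bends (hq : 0 < q) (hϑ : ϑ ∈ sphere p q) (hqr : q ≤ r)
    (hrr' : r < r') (hβ : β ∈ Bends X p q r ϑ) (hβ' : β' ∈ Bends X p q r' ϑ) :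
    ∃ w ∈ β, ∃ z ∈ β', dist z w ≤ r' - r := by
  by_cases hmeet : (β ∩ β').Nonempty
  · obtain ⟨w, hw, hw'⟩ := hmeet
    exact ⟨w, hw, w, hw', by rw [dist_self]; linarith⟩
  rw [not_nonempty_iff_eq_empty, ← disjoint_iff_inter_eq_empty] at hmeet
  have hqr' := hqr.trans hrr'.le
  obtain ⟨J, hJ⟩ := exists_isBendClosure hqr hβ
  obtain ⟨J', hJ'⟩ := exists_isBendClosure hqr' hβ'
  have hβC' : β ⊆ connectedComponentIn J'ᶜ ϑ :=
    hJ.subset_connectedComponentIn hJ' hq.le hϑ hβ.1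
      (hJ.disjoint_connectedComponentIn (hq.le.trans hqr) hrr' hβ'.1 hqr' hmeet)
      (hJ'.disjoint_of_disjoint_bend hβ.1 hqr hmeet.symm)
  obtain ⟨y, hy, hyr⟩ := hβ.1.2.2.2.1
  have hyp : y ≠ p := dist_pos.1 (by rw [mem_sphere.1 hyr]; linarith)
  obtain ⟨z, hzray, hzJ'⟩ := inter_nonempty_of_isBounded_connectedComponentIn
    (isPreconnected_outwardRay p y) (not_isBounded_outwardRay hyp) (self_mem_outwardRay p y)
    (hβC' hy) hJ'.isBounded
  obtain ⟨hyz, hzy⟩ := dist_of_mem_outwardRay hzray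
  rw [mem_sphere.1 hyr] at hyz hzy
  refine ⟨y, hy, z, hJ'.mem_bend_of_le_dist z hzJ' (hqr.trans hyz), ?_⟩
  linarith [mem_closedBall.1 (hJ'.subset_closedBall hzJ')]

end Bends

lemma IsCompact.inter_setLimsup_nonempty {α : Type*} [PseudoMetricSpace α] {K : Set α}
    (hK : IsCompact K) {A : ℕ → Set α} {w z : ℕ → α} (hw : ∀ n, w n ∈ K) (hz : ∀ n, z n ∈ A n)
    (hd : Tendsto (fun n => dist (z n) (w n)) atTop (𝓝 0)) : (K ∩ setLimsup A).Nonempty := by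
  obtain ⟨L, hLK, φ, hφ, hwL⟩ := hK.tendsto_subseq hw
  have hzL : Tendsto (z ∘ φ) atTop (𝓝 L) :=
    hwL.congr_dist (by simpa only [dist_comm, Function.comp_def] using hd.comp hφ.tendsto_atTop)
  refine ⟨L, hLK, mem_iInter.2 fun N => mem_closure_of_tendsto hzL ?_⟩
  filter_upwards [eventually_ge_atTop N] with k hk
  exact mem_iUnion₂.2 ⟨φ k, hk.trans hφ.le_apply, hz _⟩

theorem lower_limit_of_bends_general (X : Set Plane)
    (p : Plane) (q : ℝ) (hq : 0 < q)
    (ϑ : Plane) (hϑ : ϑ ∈ Metric.sphere p q)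
    (r : ℕ → ℝ) (hanti : StrictAnti r) (hgt : ∀ n, q < r n)
    (R : ℝ) (hlim : Filter.Tendsto r Filter.atTop (nhds R))
    (β : Set Plane) (hβ : β ∈ Bends X p q R ϑ)
    (βseq : ℕ → Set Plane) (hβseq : ∀ n, βseq n ∈ Bends X p q (r n) ϑ) :
    (β ∩ setLimsup βseq).Nonempty := by
  have hqR : q ≤ R := ge_of_tendsto' hlim fun n => (hgt n).le
  have hRr : ∀ n, R < r n := fun n =>
    (hanti.antitone.le_of_tendsto hlim (n + 1)).trans_lt (hanti n.lt_succ_self)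
  choose w hw z hz hdist using fun n => exists_dist_le_of_mem_bends hq hϑ hqR (hRr n) hβ (hβseq n)
  refine hβ.1.1.isCompact_s14.inter_setLimsup_nonempty hw hz
    (squeeze_zero (fun _ => dist_nonneg) hdist ?_)
  simpa using hlim.sub_const R

/-- Lower limit of bends: if `r n` strictly decreases in `(q,∞)`
to `R`, `βₙ ∈ 𝔅_{q rₙ ϑ}` for each `n`, and `β ∈ 𝔅_{q R ϑ}`, then `β` meets
`limsup βₙ`. -/
theorem lower_limit_of_bends (X : Set Plane) (hX : IsFenceSet X)
    (p : Plane) (hp : p ∈ X) (q : ℝ) (hq : 0 < q)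
    (ϑ : Plane) (hϑ : ϑ ∈ Metric.sphere p q)
    (r : ℕ → ℝ) (hanti : StrictAnti r) (hgt : ∀ n, q < r n)
    (R : ℝ) (hlim : Filter.Tendsto r Filter.atTop (nhds R))
    (β : Set Plane) (hβ : β ∈ Bends X p q R ϑ)
    (βseq : ℕ → Set Plane) (hβseq : ∀ n, βseq n ∈ Bends X p q (r n) ϑ) :
    (β ∩ setLimsup βseq).Nonempty :=
  lower_limit_of_bends_general X p q hq ϑ hϑ r hanti hgt R hlim β hβ βseq hβseq
end
end

section
/- Every fence admits an ε-cover for every ε > 0: if X is a fence and ε > 0, then there exists a finite open cover 𝒞 of X which is the union of finitely many ε-chains whose links are pairwise disjoint (links from different chains are disjoint), and such that any two members of 𝒞 with disjoint closures lie at positive distance from each other. -/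
open Set Filter Topology Metric

noncomputable section

/-!
A component of a fence is an arc or a point, so it carries a continuous `g : X → ℝ` with a
uniformly continuous left inverse `h : ℝ → X` on it; near the component, `g` then controls
distances, and compactness yields a clopen set around the component inside this neighbourhood.
Finitely many such clopen sets cover `X`, and after making them disjoint it suffices to cover one
clopen piece `A`. There the `ε`-chains are pulled back along `g` from chains of short intervals
covering the compact set `g '' A`, consecutive links overlapping at points of `g '' A`. Disjoint
closures lie at positive distance by compactness.
-/

open scoped Function

section ChainsOn

variable {Y : Type*} [TopologicalSpace Y] {n : ℕ}

def IsChainOn (K : Set Y) (I : Fin n → Set Y) : Prop :=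
  ∀ j j' : Fin n, (((j : ℤ) - j').natAbs ≤ 1 → (K ∩ I j ∩ I j').Nonempty) ∧
    (1 < ((j : ℤ) - j').natAbs → Disjoint (closure (I j)) (closure (I j')))

variable {K L : Set Y} {I : Fin n → Set Y}

lemma IsChainOn.closure_inter_nonempty_iff (h : IsChainOn K I) (j j' : Fin n) :
    (closure (I j) ∩ closure (I j')).Nonempty ↔ ((j : ℤ) - j').natAbs ≤ 1 := by
  refine ⟨fun hne => not_lt.1 fun hfar => hne.ne_empty ((h j j').2 hfar).inter_eq, fun hnear => ?_⟩
  obtain ⟨y, ⟨-, hy⟩, hy'⟩ := (h j j').1 hnear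
  exact ⟨y, subset_closure hy, subset_closure hy'⟩

lemma IsChainOn.mono (h : IsChainOn K I) (hKL : K ⊆ L) : IsChainOn L I :=
  fun j j' => ⟨fun hnear => ((h j j').1 hnear).mono (by gcongr), (h j j').2⟩

lemma IsChainOn.inter_left (h : IsChainOn K I) {J : Set Y} (hKJ : K ⊆ J) :
    IsChainOn K (fun j => J ∩ I j) := by
  refine fun j j' => ⟨fun hnear => ?_, fun hfar => ((h j j').2 hfar).mono ?_ ?_⟩
  · obtain ⟨y, ⟨hyK, hy⟩, hy'⟩ := (h j j').1 hnear
    exact ⟨y, ⟨hyK, hKJ hyK, hy⟩, hKJ hyK, hy'⟩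
  all_goals exact closure_mono inter_subset_right

lemma IsChainOn.preimage {Z : Type*} [TopologicalSpace Z] {g : Z → Y} (hg : Continuous g)
    {A : Set Z} (h : IsChainOn (g '' A) I) : IsChainOn A (fun j => A ∩ g ⁻¹' I j) := by
  refine fun j j' => ⟨fun hnear => ?_, fun hfar => ((h j j').2 hfar).preimage g |>.mono ?_ ?_⟩
  · obtain ⟨-, ⟨⟨z, hz, rfl⟩, hj⟩, hj'⟩ := (h j j').1 hnear
    exact ⟨z, ⟨hz, hz, hj⟩, hz, hj'⟩
  all_goals exact (closure_mono inter_subset_right).trans (hg.closure_preimage_subset _)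

end ChainsOn

section IntervalChains

lemma disjoint_closure_Ioo_Ioo {α : Type*} [LinearOrder α] [TopologicalSpace α]
    [OrderClosedTopology α] {a b c d : α} (h : b < c) :
    Disjoint (closure (Ioo a b)) (closure (Ioo c d)) :=
  (Iic_disjoint_Ici.2 (not_le.2 h)).mono
    (closure_minimal (Ioo_subset_Icc_self.trans Icc_subset_Iic_self) isClosed_Iic)
    (closure_minimal (Ioo_subset_Icc_self.trans Icc_subset_Ici_self) isClosed_Ici)

/-- Chop `[a, b]` into intervals of length `9ρ` whose consecutive overlaps have length `4ρ`
around the points `a + 5jρ ∈ [a, b]`: the `ρ`-density of `K` puts a point of `K` in every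
overlap. -/
lemma exists_chainOn_Icc {K : Set ℝ} {a b ρ : ℝ} (hab : a ≤ b) (hρ : 0 < ρ)
    (hK : ∀ t ∈ Icc a b, ∃ k ∈ K, dist t k < ρ) :
    ∃ (n : ℕ) (I : Fin n → Set ℝ), (∀ j, ∃ c, I j = Ioo c (c + 9 * ρ)) ∧ IsChainOn K I ∧
      Icc a b ⊆ ⋃ j, I j := by
  set p : ℕ → ℝ := fun j => a + 5 * j * ρ
  set N := ⌊(b - a) / (5 * ρ)⌋₊
  have hp_mono {i j : ℕ} (h : i ≤ j) : p i ≤ p j := by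
    have : (i : ℝ) ≤ j := Nat.cast_le.2 h
    simp only [p]; nlinarith
  have hp_succ (j : ℕ) : p (j + 1) = p j + 5 * ρ := by simp only [p]; push_cast; ring
  have hp_mem {j : ℕ} (hj : j ≤ N) : p j ∈ Icc a b := by
    have hjN : (j : ℝ) ≤ (b - a) / (5 * ρ) :=
      (Nat.cast_le.2 hj).trans (Nat.floor_le (div_nonneg (by linarith) (by positivity)))
    rw [le_div_iff₀ (by positivity)] at hjN
    simp only [p, mem_Icc]; constructor <;> nlinarith
  refine ⟨N + 1, fun j => Ioo (p j - 2 * ρ) (p j + 7 * ρ),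
    fun j => ⟨p j - 2 * ρ, by rw [show p j - 2 * ρ + 9 * ρ = p j + 7 * ρ by ring]⟩,
    fun j j' => ⟨fun hnear => ?_, fun hfar => ?_⟩, fun t ht => ?_⟩
  · set q := max (j : ℕ) j'
    obtain ⟨k, hkK, hk⟩ := hK _ (hp_mem (show q ≤ N by omega))
    rw [Real.dist_eq, abs_lt] at hk
    have hlink {i : ℕ} (h₁ : i ≤ q) (h₂ : q ≤ i + 1) :
        k ∈ Ioo (p i - 2 * ρ) (p i + 7 * ρ) := by
      have := hp_mono h₁; have := hp_mono h₂; rw [hp_succ] at this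
      constructor <;> linarith
    exact ⟨k, ⟨hkK, hlink (le_max_left _ _) (by omega)⟩, hlink (le_max_right _ _) (by omega)⟩
  · have hsep {i i' : ℕ} (h : i + 2 ≤ i') : p i + 7 * ρ < p i' - 2 * ρ := by
      have := hp_mono h; rw [hp_succ, hp_succ] at this; linarith
    rcases le_or_gt ((j : ℕ) + 2) j' with h | h
    · exact disjoint_closure_Ioo_Ioo (hsep h)
    · exact (disjoint_closure_Ioo_Ioo (hsep (by omega))).symm
  · set q := ⌊(t - a) / (5 * ρ)⌋₊
    have hq : q ≤ N := Nat.floor_le_floor (by gcongr; exact ht.2)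
    have hq₁ : (q : ℝ) ≤ (t - a) / (5 * ρ) :=
      Nat.floor_le (div_nonneg (by linarith [ht.1]) (by positivity))
    have hq₂ : (t - a) / (5 * ρ) < q + 1 := Nat.lt_floor_add_one _
    rw [le_div_iff₀ (by positivity)] at hq₁
    rw [div_lt_iff₀ (by positivity)] at hq₂
    refine mem_iUnion.2 ⟨⟨q, Nat.lt_succ_of_le hq⟩, ?_, ?_⟩ <;> simp only [p] <;> nlinarith

lemma IsCompact.finite_image_connectedComponentIn {Z : Type*} [TopologicalSpace Z]
    [LocallyConnectedSpace Z] {K V : Set Z} (hK : IsCompact K) (hV : IsOpen V) (hKV : K ⊆ V) :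
    (connectedComponentIn V '' K).Finite := by
  obtain ⟨t, -, ht, hcover⟩ := hK.elim_finite_subcover_image (c := connectedComponentIn V)
    (fun _ _ => hV.connectedComponentIn)
    fun x hx => mem_biUnion hx (mem_connectedComponentIn (hKV hx))
  refine (ht.image (connectedComponentIn V)).subset ?_
  rintro _ ⟨x, hx, rfl⟩
  obtain ⟨y, hy, hxy⟩ := mem_iUnion₂.1 (hcover hx)
  exact ⟨y, hy, connectedComponentIn_eq hxy⟩

lemma connectedComponentIn_thickening_eq {E : Type*} [SeminormedAddCommGroup E] [NormedSpace ℝ E]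
    {K : Set E} {ρ : ℝ} {k t : E} (hk : k ∈ K) (ht : dist t k < ρ) :
    connectedComponentIn (thickening ρ K) t = connectedComponentIn (thickening ρ K) k := by
  have hball := (convex_ball k ρ).isPreconnected.subset_connectedComponentIn
    (mem_ball_self (dist_nonneg.trans_lt ht)) (ball_subset_thickening hk ρ)
  exact (connectedComponentIn_eq (hball ht)).symm

lemma exists_Icc_of_mem_connectedComponentIn_thickening {K : Set ℝ} (hK : IsCompact K) {ρ : ℝ}
    (hρ : 0 < ρ) {x : ℝ} (hx : x ∈ K) :
    ∃ a b, a ≤ b ∧ K ∩ connectedComponentIn (thickening ρ K) x ⊆ Icc a b ∧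
      ∀ t ∈ Icc a b, ∃ k ∈ K ∩ connectedComponentIn (thickening ρ K) x, dist t k < ρ := by
  set C := K ∩ connectedComponentIn (thickening ρ K) x
  have hCne : C.Nonempty := ⟨x, hx, mem_connectedComponentIn (self_subset_thickening hρ K hx)⟩
  have hCbdd : BddBelow C ∧ BddAbove C :=
    ⟨hK.bddBelow.mono inter_subset_left, hK.bddAbove.mono inter_subset_left⟩
  refine ⟨sInf C, sSup C, csInf_le_csSup hCne hCbdd.1 hCbdd.2,
    fun k hk => ⟨csInf_le hCbdd.1 hk, le_csSup hCbdd.2 hk⟩, fun t ht => ?_⟩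
  obtain ⟨k₁, hk₁, hk₁t⟩ := Real.lt_sInf_add_pos hCne hρ
  obtain ⟨k₂, hk₂, hk₂t⟩ := Real.add_neg_lt_sSup hCne (neg_neg_of_pos hρ)
  rcases le_or_gt t k₁ with h₁ | h₁
  · exact ⟨k₁, hk₁, by rw [Real.dist_eq, abs_lt]; constructor <;> linarith [ht.1]⟩
  rcases le_or_gt k₂ t with h₂ | h₂
  · exact ⟨k₂, hk₂, by rw [Real.dist_eq, abs_lt]; constructor <;> linarith [ht.2]⟩
  have htC : t ∈ connectedComponentIn (thickening ρ K) x :=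
    isPreconnected_connectedComponentIn.ordConnected.out hk₁.2 hk₂.2 ⟨h₁.le, h₂.le⟩
  obtain ⟨k, hk, htk⟩ := mem_thickening_iff.1 (connectedComponentIn_subset _ _ htC)
  refine ⟨k, ⟨hk, ?_⟩, htk⟩
  rw [connectedComponentIn_eq htC, connectedComponentIn_thickening_eq hk htk]
  exact mem_connectedComponentIn (self_subset_thickening hρ K hk)

/-- The chains are cut out of the components of a thickening of `K`. -/
theorem IsCompact.exists_chainOn_cover {K : Set ℝ} (hK : IsCompact K) {w : ℝ} (hw : 0 < w) :
    ∃ (ι : Type) (_ : Finite ι) (n : ι → ℕ) (I : (i : ι) → Fin (n i) → Set ℝ),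
      (∀ i j, IsOpen (I i j)) ∧ (∀ i j, ∃ c, I i j ⊆ Ioo c (c + w)) ∧ (∀ i, IsChainOn K (I i)) ∧
      (∀ i i', i ≠ i' → ∀ j j', Disjoint (I i j) (I i' j')) ∧ K ⊆ ⋃ i, ⋃ j, I i j := by
  set ρ := w / 9
  have hρ : 0 < ρ := by positivity
  set J := connectedComponentIn (thickening ρ K)
  have : Finite (J '' K) := (hK.finite_image_connectedComponentIn isOpen_thickening
    (self_subset_thickening hρ K)).to_subtype
  have hchain (C : J '' K) : ∃ (n : ℕ) (I : Fin n → Set ℝ), (∀ j, ∃ c, I j = Ioo c (c + 9 * ρ)) ∧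
      IsChainOn (K ∩ C) I ∧ K ∩ C ⊆ ⋃ j, I j := by
    obtain ⟨_, x, hx, rfl⟩ := C
    obtain ⟨a, b, hab, hsub, hdense⟩ := exists_Icc_of_mem_connectedComponentIn_thickening hK hρ hx
    obtain ⟨n, I, hI, hIchain, hIcover⟩ := exists_chainOn_Icc hab hρ hdense
    exact ⟨n, I, hI, hIchain, hsub.trans hIcover⟩
  choose n I hI hIchain hIcover using hchain
  have hJopen (C : J '' K) : IsOpen (C : Set ℝ) := by
    obtain ⟨x, -, hx⟩ := C.2
    exact hx ▸ isOpen_thickening.connectedComponentIn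
  refine ⟨J '' K, this, n, fun C j => C ∩ I C j, fun C j => ?_, fun C j => ?_,
    fun C => ((hIchain C).inter_left inter_subset_right).mono inter_subset_left,
    fun C C' hCC' j j' => ?_, fun k hk => ?_⟩
  · obtain ⟨c, hc⟩ := hI C j
    exact (hJopen C).inter (hc ▸ isOpen_Ioo)
  · obtain ⟨c, hc⟩ := hI C j
    exact ⟨c, inter_subset_right.trans (hc.trans_le (by rw [show 9 * ρ = w by ring]))⟩
  · refine Disjoint.mono inter_subset_left inter_subset_left
      (disjoint_left.2 fun y hy hy' => hCC' (Subtype.ext ?_))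
    obtain ⟨x, -, hx⟩ := C.2
    obtain ⟨x', -, hx'⟩ := C'.2
    rw [← hx] at hy ⊢
    rw [← hx'] at hy' ⊢
    exact (connectedComponentIn_eq hy).trans (connectedComponentIn_eq hy').symm
  · have hkC : k ∈ K ∩ J k := ⟨hk, mem_connectedComponentIn (self_subset_thickening hρ K hk)⟩
    obtain ⟨j, hj⟩ := mem_iUnion.1 (hIcover ⟨J k, k, hk, rfl⟩ hkC)
    exact mem_iUnion₂.2 ⟨⟨J k, k, hk, rfl⟩, j, hkC.2, hj⟩

end IntervalChains

lemma exists_isClopen_connectedComponent_subset {Z : Type*} [TopologicalSpace Z] [T2Space Z]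
    [CompactSpace Z] {x : Z} {O : Set Z} (hO : IsOpen O) (hxO : connectedComponent x ⊆ O) :
    ∃ W, IsClopen W ∧ connectedComponent x ⊆ W ∧ W ⊆ O := by
  have : Nonempty {s : Set Z // IsClopen s ∧ x ∈ s} := ⟨⟨univ, isClopen_univ, mem_univ x⟩⟩
  obtain ⟨⟨W, hW, hxW⟩, hWO⟩ := exists_subset_nhds_of_compactSpace
    (V := fun s : {s : Set Z // IsClopen s ∧ x ∈ s} => (s : Set Z))
    (fun s t => ⟨⟨s ∩ t, s.2.1.inter t.2.1, s.2.2, t.2.2⟩, inter_subset_left, inter_subset_right⟩)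
    (fun s => s.2.1.isClosed)
    (fun y hy => hO.mem_nhds (hxO (by rwa [connectedComponent_eq_iInter_isClopen])))
  exact ⟨W, hW, hW.connectedComponent_subset hxW, hWO⟩

section MetricSpace

variable {X : Type*} [MetricSpace X]

lemma IsArc.exists_leftInvOn {A : Set X} (hA : IsArc A) :
    ∃ (g : X → ℝ) (h : ℝ → X), Continuous g ∧ UniformContinuous h ∧ LeftInvOn h g A := by
  obtain ⟨e⟩ := hA
  have : CompactSpace A := e.compactSpace
  obtain ⟨G, hG⟩ := ContinuousMap.exists_restrict_eq (isCompact_iff_compactSpace.2 this).isClosed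
    ⟨fun a => (e.symm a : ℝ), by fun_prop⟩
  refine ⟨G, fun t => e (projIcc 0 1 zero_le_one t), G.continuous,
    uniformContinuous_subtype_val.comp ((CompactSpace.uniformContinuous_of_continuous
      e.continuous).comp (LipschitzWith.projIcc zero_le_one).uniformContinuous), fun a ha => ?_⟩
  have hGa : G a = e.symm ⟨a, ha⟩ := DFunLike.congr_fun hG ⟨a, ha⟩
  simp [hGa]

lemma exists_isOpen_dist_lt_of_leftInvOn {C : Set X} {g : X → ℝ} {h : ℝ → X} (hg : Continuous g)
    (hh : UniformContinuous h) (hgh : LeftInvOn h g C) {ε : ℝ} (hε : 0 < ε) :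
    ∃ O, IsOpen O ∧ C ⊆ O ∧ ∃ η > 0, ∀ y ∈ O, ∀ z ∈ O, |g y - g z| < η → dist y z < ε := by
  obtain ⟨η, hη, hhη⟩ := Metric.uniformContinuous_iff.1 hh (ε / 3) (by positivity)
  refine ⟨{y | dist y (h (g y)) < ε / 3},
    isOpen_lt (continuous_id.dist (hh.continuous.comp hg)) continuous_const,
    fun c hc => by simp [hgh hc, hε], η, hη, fun y hy z hz hyz => ?_⟩
  have hmid : dist (h (g y)) (h (g z)) < ε / 3 := hhη (by rwa [Real.dist_eq])
  have hy' : dist y (h (g y)) < ε / 3 := hy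
  have hz' : dist (h (g z)) z < ε / 3 := by rw [dist_comm]; exact hz
  linarith [dist_triangle4 y (h (g y)) (h (g z)) z]

structure IsChainFamily (ε : ℝ) {ι : Type*} {n : ι → ℕ} (U : (i : ι) → Fin (n i) → Set X) :
    Prop where
  isOpen : ∀ i j, IsOpen (U i j)
  diam_lt : ∀ i j, diam (U i j) < ε
  closure_inter_nonempty_iff : ∀ i (j j' : Fin (n i)),
    (closure (U i j) ∩ closure (U i j')).Nonempty ↔ ((j : ℤ) - j').natAbs ≤ 1
  disjoint : ∀ i i', i ≠ i' → ∀ j j', Disjoint (U i j) (U i' j')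

def HasChainCover (ε : ℝ) (s : Set X) : Prop :=
  ∃ (ι : Type) (_ : Finite ι) (n : ι → ℕ) (U : (i : ι) → Fin (n i) → Set X),
    IsChainFamily ε U ∧ ⋃ i, ⋃ j, U i j = s

lemma IsClopen.hasChainCover [CompactSpace X] {A : Set X} (hA : IsClopen A) {g : X → ℝ}
    (hg : Continuous g) {η δ ε : ℝ} (hη : 0 < η) (hδ : 0 ≤ δ) (hδε : δ < ε)
    (hgood : ∀ y ∈ A, ∀ z ∈ A, |g y - g z| < η → dist y z ≤ δ) : HasChainCover ε A := by
  obtain ⟨ι, hι, n, I, hIopen, hIshort, hIchain, hIdisj, hIcover⟩ :=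
    (hA.isClosed.isCompact.image hg).exists_chainOn_cover hη
  refine ⟨ι, hι, n, fun i j => A ∩ g ⁻¹' I i j, ⟨fun i j => hA.isOpen.inter
    ((hIopen i j).preimage hg), fun i j => ?_,
    fun i => ((hIchain i).preimage hg).closure_inter_nonempty_iff,
    fun i i' hii' j j' => ((hIdisj i i' hii' j j').preimage g).mono inter_subset_right
      inter_subset_right⟩, subset_antisymm (iUnion₂_subset fun _ _ => inter_subset_left)
    fun x hx => ?_⟩
  · obtain ⟨c, hc⟩ := hIshort i j
    refine (diam_le_of_forall_dist_le hδ fun y hy z hz => hgood y hy.1 z hz.1 ?_).trans_lt hδε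
    have hy := hc hy.2
    have hz := hc hz.2
    rw [abs_sub_lt_iff]; constructor <;> linarith [hy.1, hy.2, hz.1, hz.2]
  · obtain ⟨i, j, hj⟩ := mem_iUnion₂.1 (hIcover ⟨x, hx, rfl⟩)
    exact mem_iUnion₂.2 ⟨i, j, hx, hj⟩

lemma HasChainCover.iUnion {κ : Type} [Finite κ] {ε : ℝ} {s : κ → Set X}
    (hs : Pairwise (Disjoint on s)) (h : ∀ k, HasChainCover ε (s k)) :
    HasChainCover ε (⋃ k, s k) := by
  choose ι hι n U hU hUs using h
  have hsub (k : κ) (i : ι k) (j : Fin (n k i)) : U k i j ⊆ s k :=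
    hUs k ▸ subset_iUnion₂ (s := fun i j => U k i j) i j
  refine ⟨Σ k, ι k, inferInstance, fun a => n a.1 a.2, fun a => U a.1 a.2,
    ⟨fun a => (hU a.1).isOpen a.2, fun a => (hU a.1).diam_lt a.2,
      fun a => (hU a.1).closure_inter_nonempty_iff a.2, ?_⟩, ?_⟩
  · rintro ⟨k, i⟩ ⟨k', i'⟩ hne j j'
    by_cases hk : k = k'
    · subst hk
      exact (hU k).disjoint i i' (fun hi => hne (by rw [hi])) j j'
    · exact (hs hk).mono (hsub k i j) (hsub k' i' j')
  · simp only [iUnion_sigma, hUs]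

lemma hasChainCover_univ_of_forall_exists_isClopen [CompactSpace X] {ε : ℝ}
    (h : ∀ x : X, ∃ W, IsClopen W ∧ x ∈ W ∧ ∀ A ⊆ W, IsClopen A → HasChainCover ε A) :
    HasChainCover ε (univ : Set X) := by
  choose W hW hxW hWA using h
  obtain ⟨t, ht⟩ := isCompact_univ.elim_finite_subcover W (fun x => (hW x).isOpen)
    fun x _ => mem_iUnion.2 ⟨x, hxW x⟩
  set f : Fin t.card → Set X := fun k => W (t.equivFin.symm k)
  have hf : ⋃ k, f k = univ := by
    refine eq_univ_of_forall fun x => ?_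
    obtain ⟨y, hy, hxy⟩ := mem_iUnion₂.1 (ht (mem_univ x))
    exact mem_iUnion.2 ⟨t.equivFin ⟨y, hy⟩, by simpa [f] using hxy⟩
  rw [← hf, ← iUnion_disjointed]
  refine HasChainCover.iUnion (disjoint_disjointed f) fun k => hWA _ _ (disjointed_subset f k)
    (disjointedRec (fun _ i hs => hs.diff (hW _)) (hW _))

lemma IsFenceSpace.hasChainCover_univ (hX : IsFenceSpace X) {ε : ℝ} (hε : 0 < ε) :
    HasChainCover ε (univ : Set X) := by
  have := hX.1
  refine hasChainCover_univ_of_forall_exists_isClopen fun x => ?_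
  obtain ⟨g, h, hg, hh, hgh⟩ : ∃ (g : X → ℝ) (h : ℝ → X), Continuous g ∧ UniformContinuous h ∧
      LeftInvOn h g (connectedComponent x) := by
    rcases hX.2 x with harc | hpt
    · exact harc.exists_leftInvOn
    · exact ⟨0, fun _ => x, continuous_const, uniformContinuous_const,
        fun c hc => (hpt ▸ hc : c ∈ ({x} : Set X)).symm⟩
  obtain ⟨O, hO, hCO, η, hη, hgood⟩ := exists_isOpen_dist_lt_of_leftInvOn hg hh hgh (half_pos hε)
  obtain ⟨W, hW, hCW, hWO⟩ := exists_isClopen_connectedComponent_subset hO hCO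
  exact ⟨W, hW, hCW mem_connectedComponent, fun A hAW hA => hA.hasChainCover hg hη
    (half_pos hε).le (half_lt_self hε) fun y hy z hz hyz =>
      (hgood y (hWO (hAW hy)) z (hWO (hAW hz)) hyz).le⟩

lemma exists_pos_le_dist_of_disjoint_closure [CompactSpace X] {s t : Set X}
    (h : Disjoint (closure s) (closure t)) : ∃ δ > 0, ∀ y ∈ s, ∀ z ∈ t, δ ≤ dist y z := by
  obtain ⟨δ, hδ, hdisj⟩ := h.exists_thickenings isClosed_closure.isCompact isClosed_closure
  refine ⟨δ, hδ, fun y hy z hz => not_lt.1 fun hyz => disjoint_left.1 hdisj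
    (mem_thickening_iff.2 ⟨y, subset_closure hy, by rwa [dist_comm]⟩)
    (self_subset_thickening hδ _ (subset_closure hz))⟩

end MetricSpace

/-- Every fence admits an `ε`-cover for every `ε > 0`: a finite
open cover consisting of finitely many `ε`-chains, with links from different
chains disjoint, such that any two members with disjoint closures are a
positive distance apart. -/
theorem fence_has_eps_cover (X : Type*) [MetricSpace X] (hX : IsFenceSpace X)
    (ε : ℝ) (hε : 0 < ε) :
    ∃ (m : ℕ) (n : Fin m → ℕ) (U : (i : Fin m) → Fin (n i) → Set X),
      (∀ i j, IsOpen (U i j)) ∧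
      (∀ i j, Metric.diam (U i j) < ε) ∧
      (∀ i, ∀ j j' : Fin (n i),
        (closure (U i j) ∩ closure (U i j')).Nonempty ↔
          ((j : ℤ) - (j' : ℤ)).natAbs ≤ 1) ∧
      (∀ i i' : Fin m, i ≠ i' → ∀ j j', Disjoint (U i j) (U i' j')) ∧
      (∀ x : X, ∃ i j, x ∈ U i j) ∧
      (∀ i j i' j', Disjoint (closure (U i j)) (closure (U i' j')) →
        ∃ δ : ℝ, 0 < δ ∧ ∀ y ∈ U i j, ∀ z ∈ U i' j', δ ≤ dist y z) := by
  have := hX.1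
  obtain ⟨ι, _, n, U, hU, hcover⟩ := hX.hasChainCover_univ hε
  set e := (Finite.equivFin ι).symm
  refine ⟨Nat.card ι, fun k => n (e k), fun k => U (e k), fun k => hU.isOpen (e k),
    fun k => hU.diam_lt (e k), fun k => hU.closure_inter_nonempty_iff (e k),
    fun k k' hkk' => hU.disjoint _ _ (e.injective.ne hkk'), fun x => ?_,
    fun _ _ _ _ h => exists_pos_le_dist_of_disjoint_closure h⟩
  obtain ⟨i, j, hx⟩ := mem_iUnion₂.1 (hcover.symm ▸ mem_univ x)
  obtain ⟨k, rfl⟩ := e.surjective i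
  exact ⟨k, j, hx⟩
end
end

section
/- Let X be a fence and let U ⊆ X be a pierced open set. Then the frontier of U (taken in X) is totally disconnected. -/
open Set Filter Topology Metric

noncomputable section

lemma mid_not_endpoint {X : Type*} [TopologicalSpace X] {A : Set X}
    (e : Set.Icc (0 : ℝ) 1 ≃ₜ A) {m : ℝ} (hm0 : 0 < m) (hm1 : m < 1) :
    ¬ IsArcEndpoint A ((e ⟨m, ⟨hm0.le, hm1.le⟩⟩ : A) : X) := by
  rintro ⟨e', h⟩
  have key : ∀ c : Set.Icc (0 : ℝ) 1, (c.val = 0 ∨ c.val = 1) →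
      (e' c : X) = ((e ⟨m, ⟨hm0.le, hm1.le⟩⟩ : A) : X) → False := by
    intro c hc hce
    set f : Set.Icc (0 : ℝ) 1 ≃ₜ Set.Icc (0 : ℝ) 1 := e'.trans e.symm with hf
    have hfc : f c = ⟨m, ⟨hm0.le, hm1.le⟩⟩ := by
      have : e' c = e ⟨m, ⟨hm0.le, hm1.le⟩⟩ := Subtype.ext hce
      simp [hf, this]
    -- the complement of c in [0,1] is preconnected
    have hpre : IsPreconnected ({u : Set.Icc (0 : ℝ) 1 | u ≠ c}) := by
      have hproj : Continuous (Set.projIcc (0:ℝ) 1 zero_le_one) := continuous_projIcc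
      rcases hc with hc | hc
      · have heq : {u : Set.Icc (0 : ℝ) 1 | u ≠ c}
            = Set.projIcc (0:ℝ) 1 zero_le_one '' Set.Ioc 0 1 := by
          ext u
          constructor
          · intro hu
            have h0 : (0:ℝ) < u.val := lt_of_le_of_ne u.2.1 (by
              intro h; exact hu (Subtype.ext (by rw [← h, hc])))
            exact ⟨u.val, ⟨h0, u.2.2⟩, by rw [Set.projIcc_of_mem]⟩
          · rintro ⟨x, hx, rfl⟩
            have hxm : x ∈ Set.Icc (0:ℝ) 1 := ⟨hx.1.le, hx.2⟩
            rw [Set.projIcc_of_mem _ hxm]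
            intro h
            have : x = (0:ℝ) := by rw [← hc]; exact congrArg Subtype.val h
            exact hx.1.ne' this
        rw [heq]
        exact isPreconnected_Ioc.image _ hproj.continuousOn
      · have heq : {u : Set.Icc (0 : ℝ) 1 | u ≠ c}
            = Set.projIcc (0:ℝ) 1 zero_le_one '' Set.Ico 0 1 := by
          ext u
          constructor
          · intro hu
            have h1 : u.val < 1 := lt_of_le_of_ne u.2.2 (by
              intro h; exact hu (Subtype.ext (by rw [h, hc])))
            exact ⟨u.val, ⟨u.2.1, h1⟩, by rw [Set.projIcc_of_mem]⟩
          · rintro ⟨x, hx, rfl⟩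
            have hxm : x ∈ Set.Icc (0:ℝ) 1 := ⟨hx.1, hx.2.le⟩
            rw [Set.projIcc_of_mem _ hxm]
            intro h
            have : x = (1:ℝ) := by rw [← hc]; exact congrArg Subtype.val h
            exact hx.2.ne this
        rw [heq]
        exact isPreconnected_Ico.image _ hproj.continuousOn
    -- map through f and then to ℝ
    have himg : f '' {u : Set.Icc (0 : ℝ) 1 | u ≠ c}
        = {u : Set.Icc (0 : ℝ) 1 | u ≠ f c} := by
      have : ({u : Set.Icc (0 : ℝ) 1 | u ≠ c}) = ({c}ᶜ : Set _) := rfl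
      rw [this, Set.image_compl_eq f.bijective, Set.image_singleton]
      rfl
    have hpre2 : IsPreconnected ({u : Set.Icc (0 : ℝ) 1 | u ≠ f c}) := by
      rw [← himg]; exact hpre.image _ f.continuous.continuousOn
    have hpre3 : IsPreconnected (Set.Icc (0:ℝ) 1 \ {m}) := by
      have heq : Subtype.val '' {u : Set.Icc (0 : ℝ) 1 | u ≠ f c}
          = Set.Icc (0:ℝ) 1 \ {m} := by
        ext x
        constructor
        · rintro ⟨u, hu, rfl⟩
          refine ⟨u.2, ?_⟩
          intro hx
          exact hu (Subtype.ext (by rw [hfc]; exact hx))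
        · rintro ⟨hx, hxm⟩
          refine ⟨⟨x, hx⟩, ?_, rfl⟩
          intro h
          exact hxm (by have := congrArg Subtype.val h; rwa [hfc] at this)
      rw [← heq]
      exact hpre2.image _ continuous_subtype_val.continuousOn
    have hord := hpre3.ordConnected
    have h0 : (0:ℝ) ∈ Set.Icc (0:ℝ) 1 \ {m} :=
      ⟨⟨le_refl _, zero_le_one⟩, by simpa using hm0.ne⟩
    have h1 : (1:ℝ) ∈ Set.Icc (0:ℝ) 1 \ {m} :=
      ⟨⟨zero_le_one, le_refl _⟩, by simpa using hm1.ne'⟩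
    have hmem : m ∈ Set.Icc (0:ℝ) 1 \ {m} :=
      hord.out h0 h1 ⟨hm0.le, hm1.le⟩
    exact hmem.2 rfl
  rcases h with h | h
  · exact key _ (Or.inl rfl) h
  · exact key _ (Or.inr rfl) h

/-- The frontier of a pierced open subset of a fence is totally
disconnected. -/
theorem frontier_of_pierced_totally_disconnected (X : Type*) [MetricSpace X]
    (hX : IsFenceSpace X) (U : Set X) (hU : IsPierced U) :
    IsTotallyDisconnected (frontier U) := by
  intro t hts ht x hx y hy
  by_contra hxy
  have hA : t ⊆ connectedComponent x := ht.subset_connectedComponent hx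
  rcases hX.2 x with harc | hsing
  swap
  · exact hxy ((hsing ▸ hA hy : y ∈ ({x} : Set X))).symm
  obtain ⟨e⟩ := harc
  set A := connectedComponent x with hAdef
  set g : Set.Icc (0 : ℝ) 1 → X := fun u => ((e u : A) : X) with hg
  have hg_cont : Continuous g := continuous_subtype_val.comp e.continuous
  have hg_inj : Function.Injective g := fun u v h =>
    e.injective (Subtype.val_injective h)
  have hg_ind : Topology.IsInducing g :=
    Topology.IsInducing.subtypeVal.comp e.isEmbedding.isInducing
  have hrange : Set.range g = A := by
    have : Set.range g = Subtype.val '' Set.range e := by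
      rw [hg]; rw [← Set.range_comp]; rfl
    rw [this, e.range_coe]; simp
  set P : Set (Set.Icc (0:ℝ) 1) := g ⁻¹' t with hP
  have htA : t ⊆ Set.range g := hrange ▸ hA
  have ht_eq : g '' P = t := Set.image_preimage_eq_of_subset htA
  have hPpre : IsPreconnected P := hg_ind.isPreconnected_image.mp (ht_eq ▸ ht)
  set Q : Set ℝ := Subtype.val '' P with hQdef
  have hQ : IsPreconnected Q := hPpre.image _ continuous_subtype_val.continuousOn
  have hxA : x ∈ A := mem_connectedComponent
  set a : Set.Icc (0:ℝ) 1 := e.symm ⟨x, hxA⟩ with ha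
  set b : Set.Icc (0:ℝ) 1 := e.symm ⟨y, hA hy⟩ with hb
  have hga : g a = x := by simp [hg, ha]
  have hgb : g b = y := by simp [hg, hb]
  have haP : a ∈ P := by rw [hP, Set.mem_preimage, hga]; exact hx
  have hbP : b ∈ P := by rw [hP, Set.mem_preimage, hgb]; exact hy
  have hne : a.val ≠ b.val := by
    intro h
    exact hxy (by rw [← hga, ← hgb, Subtype.ext h])
  set A0 := min a.val b.val with hA0
  set B0 := max a.val b.val with hB0
  have hA0B0 : A0 < B0 := min_lt_max.mpr hne
  have hA0Q : A0 ∈ Q := by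
    rcases min_cases a.val b.val with ⟨h, _⟩ | ⟨h, _⟩ <;> rw [hA0, h]
    exacts [⟨a, haP, rfl⟩, ⟨b, hbP, rfl⟩]
  have hB0Q : B0 ∈ Q := by
    rcases max_cases a.val b.val with ⟨h, _⟩ | ⟨h, _⟩ <;> rw [hB0, h]
    exacts [⟨a, haP, rfl⟩, ⟨b, hbP, rfl⟩]
  have hIcc : Set.Icc A0 B0 ⊆ Q := hQ.ordConnected.out hA0Q hB0Q
  have hA0nn : 0 ≤ A0 := le_min a.2.1 b.2.1
  have hB0le : B0 ≤ 1 := max_le a.2.2 b.2.2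
  set m := (A0 + B0) / 2 with hm
  have hmA0 : A0 < m := by rw [hm]; linarith
  have hmB0 : m < B0 := by rw [hm]; linarith
  have hm0 : 0 < m := lt_of_le_of_lt hA0nn hmA0
  have hm1 : m < 1 := lt_of_lt_of_le hmB0 hB0le
  -- points of g '' (Icc A0 B0) lie in t
  have hsub : ∀ c : ℝ, ∀ hc : c ∈ Set.Icc (0:ℝ) 1, c ∈ Set.Icc A0 B0 →
      g ⟨c, hc⟩ ∈ t := by
    intro c hc hc'
    obtain ⟨u, huP, huv⟩ := hIcc hc'
    have : u = ⟨c, hc⟩ := Subtype.ext huv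
    rw [← this]
    exact huP
  set z := g ⟨m, ⟨hm0.le, hm1.le⟩⟩ with hz
  have hzt : z ∈ t := hsub m _ ⟨hmA0.le, hmB0.le⟩
  have hzfr : z ∈ frontier U := hts hzt
  obtain ⟨-, hpierce⟩ := hU.2 z hzfr
  set K := g '' {u : Set.Icc (0:ℝ) 1 | u.val ∉ Set.Ioo A0 B0} with hK
  have hKclosed : IsClosed K := by
    have h1 : IsClosed {u : Set.Icc (0:ℝ) 1 | u.val ∉ Set.Ioo A0 B0} :=
      (isOpen_Ioo.isClosed_compl).preimage continuous_subtype_val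
    exact (h1.isCompact.image hg_cont).isClosed
  have hzK : z ∉ K := by
    rintro ⟨u, hu, hgu⟩
    have : u = ⟨m, ⟨hm0.le, hm1.le⟩⟩ := hg_inj hgu
    rw [this] at hu
    exact hu ⟨hmA0, hmB0⟩
  have hzA : z ∈ A := hrange ▸ Set.mem_range_self _
  have hnep : ¬ IsArcEndpoint A z := mid_not_endpoint e hm0 hm1
  obtain ⟨⟨w, hw⟩, -⟩ := hpierce Kᶜ hKclosed.isOpen_compl hzK A ⟨e⟩ hzA hnep
  obtain ⟨⟨hwA, hwV⟩, hwU⟩ := hw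
  obtain ⟨u, hgu⟩ := (hrange ▸ hwA : w ∈ Set.range g)
  have huIoo : u.val ∈ Set.Ioo A0 B0 := by
    by_contra h
    exact hwV ⟨u, h, hgu⟩
  have hwt : w ∈ t := by
    have := hsub u.val u.2 ⟨huIoo.1.le, huIoo.2.le⟩
    rwa [show (⟨u.val, u.2⟩ : Set.Icc (0:ℝ) 1) = u from rfl, hgu] at this
  have := hts hwt
  rw [hU.1.frontier_eq] at this
  exact this.2 hwU
end
end
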